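/- arXiv:1412.6374 — 4 statements merged into one kernel-verified Lean document; each statement's English description precedes it below -/
import Mathlib

section
/- Let ν > 0, T > 0, and define 𝔥(t) = (8/π²) Σ_{n=0}^∞ (1/(2n+1)²) e^{-ν(2n+1)²π² t} and 𝓗(t) = -8ν Σ_{n=0}^∞ e^{-ν(2n+1)²π² t} (so that 𝓗 = 𝔥' on (0,∞)). Then ∫₀ᵀ |𝓗(t)| dt = 𝔥(0) - 𝔥(T) = 1 - 𝔥(T) < 1. -/
open MeasureTheory Real Set

/-!
`|𝓗| = -𝓗` is a series of positive exponentials `8ν e^{c_n t}` with `c_n = -ν(2n+1)²π²`. Their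
integrals over `(0, T)` are bounded by `8ν/|c_n| = (8/π²)(2n+1)⁻²`, a summable sequence, so the
series may be integrated term by term: the `n`-th term contributes
`8ν (e^{c_n T} - 1)/c_n = (8/π²)(2n+1)⁻² (1 - e^{c_n T})`, and summing gives `𝔥(0) - 𝔥(T)`.
Finally `𝔥(0) = 1` because `Σ (2n+1)⁻² = π²/8` is the odd part of `ζ(2) = π²/6`, and `𝔥(T) > 0`
termwise.
-/

/-- The flux kernel `𝔥(t) = (8/π²) Σₙ (1/(2n+1)²) e^{-ν(2n+1)²π²t}`. -/
noncomputable def fluxKernel (ν t : ℝ) : ℝ :=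
  (8/π^2) * ∑' n : ℕ, (1/(2*(n:ℝ)+1)^2) * Real.exp (-ν * (2*(n:ℝ)+1)^2 * π^2 * t)

/-- The derivative of the flux kernel, `𝓗(t) = -8ν Σₙ e^{-ν(2n+1)²π²t}`. -/
noncomputable def kernelDeriv (ν t : ℝ) : ℝ :=
  -8 * ν * ∑' n : ℕ, Real.exp (-ν * (2*(n:ℝ)+1)^2 * π^2 * t)

theorem hasSum_one_div_odd_sq : HasSum (fun n : ℕ => 1 / (2 * (n : ℝ) + 1) ^ 2) (π ^ 2 / 8) := by
  have hsum : Summable (fun n : ℕ => 1 / (2 * (n : ℝ) + 1) ^ 2) := by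
    refine ((summable_nat_add_iff 1).2 (summable_one_div_nat_pow.2 one_lt_two)).of_nonneg_of_le
      (fun n => by positivity) fun n => ?_
    push_cast
    gcongr
    linarith [n.cast_nonneg (α := ℝ)]
  have heven : HasSum (fun k : ℕ => 1 / ((2 * k : ℕ) : ℝ) ^ 2) (π ^ 2 / 24) := by
    have h : (fun k : ℕ => 1 / ((2 * k : ℕ) : ℝ) ^ 2) =
        fun k : ℕ => 1 / 4 * (1 / (k : ℝ) ^ 2) := by
      ext k; push_cast; ring
    rw [h, show π ^ 2 / 24 = 1 / 4 * (π ^ 2 / 6) by ring]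
    exact hasSum_zeta_two.mul_left _
  have hodd : HasSum (fun k : ℕ => 1 / ((2 * k + 1 : ℕ) : ℝ) ^ 2)
      (∑' n : ℕ, 1 / (2 * (n : ℝ) + 1) ^ 2) := by
    push_cast; exact hsum.hasSum
  have htot :=
    (HasSum.even_add_odd (f := fun n : ℕ => 1 / (n : ℝ) ^ 2) heven hodd).unique hasSum_zeta_two
  rw [show π ^ 2 / 8 = ∑' n : ℕ, 1 / (2 * (n : ℝ) + 1) ^ 2 by linarith]
  exact hsum.hasSum

theorem intervalIntegral_exp_mul {c : ℝ} (hc : c ≠ 0) (a b : ℝ) :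
    ∫ t in a..b, exp (c * t) = (exp (c * b) - exp (c * a)) / c := by
  simp [intervalIntegral.integral_comp_mul_left (fun t => exp t) hc, div_eq_inv_mul]

theorem hasSum_intervalIntegral_exp_mul {ι : Type*} [Countable ι] {c : ι → ℝ} (hc : ∀ n, c n < 0)
    (hs : Summable fun n => (c n)⁻¹) {T : ℝ} (hT : 0 ≤ T) :
    HasSum (fun n => (exp (c n * T) - 1) / c n) (∫ t in (0:ℝ)..T, ∑' n, exp (c n * t)) := by
  have hint (n : ι) : ∫ t in Ioc 0 T, exp (c n * t) = (exp (c n * T) - 1) / c n := by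
    rw [← intervalIntegral.integral_of_le hT, intervalIntegral_exp_mul (hc n).ne, mul_zero,
      exp_zero]
  have hexp_le (n : ι) : exp (c n * T) ≤ 1 :=
    exp_le_one_iff.2 (mul_nonpos_of_nonpos_of_nonneg (hc n).le hT)
  have hnonneg (n : ι) : 0 ≤ (exp (c n * T) - 1) / c n :=
    div_nonneg_of_nonpos (by linarith [hexp_le n]) (hc n).le
  have hle (n : ι) : (exp (c n * T) - 1) / c n ≤ -(c n)⁻¹ := by
    rw [div_le_iff_of_neg (hc n), neg_mul, inv_mul_cancel₀ (hc n).ne]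
    linarith [exp_pos (c n * T)]
  have hsum_norm : Summable fun n => ∫ t in Ioc 0 T, ‖exp (c n * t)‖ := by
    simp only [norm_of_nonneg (exp_pos _).le, hint]
    exact hs.neg.of_nonneg_of_le hnonneg hle
  have h : HasSum (fun n => ∫ t in Ioc 0 T, exp (c n * t))
      (∫ t in Ioc 0 T, ∑' n, exp (c n * t)) :=
    hasSum_integral_of_summable_integral_norm
      (fun n => (continuous_exp.comp (continuous_const_mul (c n))).integrableOn_Ioc) hsum_norm
  simpa only [hint, intervalIntegral.integral_of_le hT] using h

theorem fluxKernel_zero (ν : ℝ) : fluxKernel ν 0 = 1 := by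
  simp only [fluxKernel, mul_zero, exp_zero, mul_one, hasSum_one_div_odd_sq.tsum_eq]
  field_simp

theorem summable_fluxKernel_terms {ν t : ℝ} (hν : 0 ≤ ν) (ht : 0 ≤ t) :
    Summable fun n : ℕ => 1 / (2 * (n : ℝ) + 1) ^ 2 * exp (-ν * (2 * n + 1) ^ 2 * π ^ 2 * t) := by
  refine hasSum_one_div_odd_sq.summable.of_nonneg_of_le (fun n => by positivity) fun n => ?_
  refine mul_le_of_le_one_right (by positivity) ?_
  rw [exp_le_one_iff, neg_mul, neg_mul, neg_mul, neg_nonpos]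
  positivity

theorem fluxKernel_pos {ν t : ℝ} (hν : 0 ≤ ν) (ht : 0 ≤ t) : 0 < fluxKernel ν t :=
  mul_pos (by positivity)
    ((summable_fluxKernel_terms hν ht).tsum_pos (fun n => by positivity) 0 (by positivity))

theorem hasSum_fluxKernel_zero_sub {ν T : ℝ} (hν : 0 ≤ ν) (hT : 0 ≤ T) :
    HasSum (fun n : ℕ => 8 / π ^ 2 * (1 / (2 * (n : ℝ) + 1) ^ 2
      - 1 / (2 * (n : ℝ) + 1) ^ 2 * exp (-ν * (2 * n + 1) ^ 2 * π ^ 2 * T)))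
      (fluxKernel ν 0 - fluxKernel ν T) := by
  have h :=
    (hasSum_one_div_odd_sq.sub (summable_fluxKernel_terms hν hT).hasSum).mul_left (8 / π ^ 2)
  have h0 : 8 / π ^ 2 * (π ^ 2 / 8) = fluxKernel ν 0 := by
    rw [fluxKernel_zero]; field_simp
  rwa [mul_sub, h0] at h

theorem abs_kernelDeriv {ν : ℝ} (hν : 0 ≤ ν) (t : ℝ) :
    |kernelDeriv ν t| = 8 * ν * ∑' n : ℕ, exp (-ν * (2 * (n : ℝ) + 1) ^ 2 * π ^ 2 * t) := by
  rw [kernelDeriv, neg_mul, neg_mul, abs_neg, abs_of_nonneg]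
  exact mul_nonneg (by positivity) (tsum_nonneg fun n => (exp_pos _).le)

theorem integral_abs_kernelDeriv {ν T : ℝ} (hν : 0 < ν) (hT : 0 ≤ T) :
    ∫ t in (0:ℝ)..T, |kernelDeriv ν t| = fluxKernel ν 0 - fluxKernel ν T := by
  have hc (n : ℕ) : -ν * (2 * (n : ℝ) + 1) ^ 2 * π ^ 2 < 0 := by
    simp only [neg_mul, neg_lt_zero]; positivity
  have hs : Summable fun n : ℕ => (-ν * (2 * (n : ℝ) + 1) ^ 2 * π ^ 2)⁻¹ := by
    refine (hasSum_one_div_odd_sq.summable.mul_left (-(ν * π ^ 2)⁻¹)).congr fun n => ?_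
    field_simp
  have hint := (hasSum_intervalIntegral_exp_mul hc hs hT).mul_left (8 * ν)
  rw [intervalIntegral.integral_congr (fun t _ => abs_kernelDeriv hν.le t),
    intervalIntegral.integral_const_mul]
  refine hint.unique ((hasSum_fluxKernel_zero_sub hν.le hT).congr_fun fun n => ?_)
  field_simp
  ring

/-- `∫₀ᵀ |𝓗(t)| dt = 𝔥(0) - 𝔥(T) = 1 - 𝔥(T) < 1`. -/
theorem stmt_9 (ν T : ℝ) (hν : 0 < ν) (hT : 0 < T) :
    (∫ t in (0:ℝ)..T, |kernelDeriv ν t|) = fluxKernel ν 0 - fluxKernel ν T ∧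
    fluxKernel ν 0 - fluxKernel ν T = 1 - fluxKernel ν T ∧
    1 - fluxKernel ν T < 1 :=
  ⟨integral_abs_kernelDeriv hν hT.le, by rw [fluxKernel_zero],
    sub_lt_self 1 (fluxKernel_pos hν.le hT.le)⟩
end

section
/- Let ν > 0, T > 0, and let f : [0,T] → ℝ satisfy |f(t₁) - f(t₂)| ≤ L|t₁ - t₂|^γ for all t₁, t₂ ∈ [0,T], with L > 0 and 0 < γ < 1/2. Define 𝔥(t) = (8/π²) Σ_{n=0}^∞ (1/(2n+1)²) e^{-ν(2n+1)²π² t} and 𝓕(t) = ∫₀ᵗ 𝔥(t-τ) f(τ) dτ. Then 𝓕 is differentiable at every t ∈ (0,T) with 𝓕'(t) = f(t) + ∫₀ᵗ 𝔥'(t-τ) f(τ) dτ, where 𝔥'(s) = -8ν Σ_{n=0}^∞ e^{-ν(2n+1)²π² s}. -/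
/-!
Since `𝔥(s) = 1 + ∫₀ˢ 𝔥'`, Fubini on the triangle `0 < τ ≤ s ≤ u` rewrites the flux as
`𝓕(u) = ∫₀ᵘ f + ∫₀ᵘ H` with `H(s) = ∫₀ˢ 𝔥'(s - τ) f(τ) dτ`, and the fundamental theorem of
calculus gives `𝓕' = f + H` once `H` is continuous. Continuity of `H` follows by dominated
convergence from the integrability of `𝔥'` near `0`, which holds because `𝔥' ≤ 0` is the
derivative of `𝔥`, a function continuous on `[0, T]`.
-/

open MeasureTheory Real Set

theorem continuousOn_of_dist_le_rpow {X Y : Type*} [PseudoMetricSpace X] [PseudoMetricSpace Y]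
    {f : X → Y} {s : Set X} {L γ : ℝ} (hγ : 0 < γ)
    (hf : ∀ x ∈ s, ∀ y ∈ s, dist (f x) (f y) ≤ L * dist x y ^ γ) : ContinuousOn f s := by
  intro x hx
  rw [ContinuousWithinAt, tendsto_iff_dist_tendsto_zero]
  have hbound : Continuous fun y => L * dist y x ^ γ :=
    continuous_const.mul ((continuous_id.dist continuous_const).rpow_const fun _ => .inr hγ.le)
  refine squeeze_zero' (.of_forall fun y => dist_nonneg)
    (eventually_nhdsWithin_of_forall fun y hy => hf y hy x hx) ?_
  simpa [zero_rpow hγ.ne'] using (hbound.tendsto x).mono_left nhdsWithin_le_nhds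

section TriangleSwap

variable {E : Type*} [NormedAddCommGroup E] [NormedSpace ℝ E]

theorem intervalIntegral_indicator_Ici {f : ℝ → E} {a b c : ℝ} (h : b ∈ Ioc a c) :
    ∫ x in a..c, (Ici b).indicator f x = ∫ x in b..c, f x := by
  have hset : Ici b ∩ Ioc a c = Icc b c := by
    ext x
    simp only [mem_inter_iff, mem_Ici, mem_Ioc, mem_Icc]
    constructor
    · rintro ⟨hbx, -, hxc⟩; exact ⟨hbx, hxc⟩
    · rintro ⟨hbx, hxc⟩; exact ⟨hbx, h.1.trans_le hbx, hxc⟩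
  rw [intervalIntegral.integral_of_le (h.1.le.trans h.2), intervalIntegral.integral_of_le h.2,
    integral_indicator measurableSet_Ici, Measure.restrict_restrict measurableSet_Ici, hset,
    integral_Icc_eq_integral_Ioc]

theorem intervalIntegral_intervalIntegral_swap_triangle {F : ℝ → ℝ → E} {a b : ℝ} (hab : a ≤ b)
    (hF : IntegrableOn (Function.uncurry F) ({p | p.1 ≤ p.2} ∩ Ioc a b ×ˢ Ioc a b)) :
    ∫ x in a..b, ∫ y in x..b, F x y = ∫ y in a..b, ∫ x in a..y, F x y := by
  set G : ℝ → ℝ → E := fun x y => {p : ℝ × ℝ | p.1 ≤ p.2}.indicator (Function.uncurry F) (x, y)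
  have hG : IntegrableOn (Function.uncurry G) (uIoc a b ×ˢ uIoc a b) := by
    rw [uIoc_of_le hab]
    exact (integrableOn_indicator_iff (measurableSet_le measurable_fst measurable_snd)).2 hF
  calc ∫ x in a..b, ∫ y in x..b, F x y = ∫ x in a..b, ∫ y in a..b, G x y := by
        refine intervalIntegral.integral_congr_ae (.of_forall fun x hx => ?_)
        rw [uIoc_of_le hab] at hx
        exact (intervalIntegral_indicator_Ici hx).symm
    _ = ∫ y in a..b, ∫ x in a..b, G x y := intervalIntegral_intervalIntegral_swap hG
    _ = ∫ y in a..b, ∫ x in a..y, F x y := by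
        refine intervalIntegral.integral_congr fun y hy => ?_
        rw [uIcc_of_le hab] at hy
        exact intervalIntegral.integral_indicator hy

end TriangleSwap

noncomputable def volterraConv (k g : ℝ → ℝ) (s : ℝ) : ℝ :=
  ∫ τ in 0..s, k (s - τ) * g τ

section VolterraConv

variable {k g : ℝ → ℝ}

theorem integral_primitive_mul_eq_integral_volterraConv {u : ℝ} (hu : 0 ≤ u)
    (hk : IntegrableOn k (Ioc 0 u)) (hg : IntegrableOn g (Ioc 0 u)) :
    ∫ τ in 0..u, (∫ r in 0..u - τ, k r) * g τ = ∫ s in 0..u, volterraConv k g s := by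
  have hconv : Integrable (fun p : ℝ × ℝ =>
      (Ioc 0 u).indicator g p.2 * (Icc 0 u).indicator k (p.1 - p.2)) (volume.prod volume) :=
    ((integrable_indicator_iff measurableSet_Ioc).2 hg).convolution_integrand
      (ContinuousLinearMap.mul ℝ ℝ)
      ((integrable_indicator_iff measurableSet_Icc).2
        ((integrableOn_Icc_iff_integrableOn_Ioc).mpr hk))
  have hint : IntegrableOn (Function.uncurry fun τ s => k (s - τ) * g τ)
      ({p | p.1 ≤ p.2} ∩ Ioc 0 u ×ˢ Ioc 0 u) := by
    refine hconv.swap.integrableOn.congr_fun (fun ⟨τ, s⟩ hp => ?_)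
      ((measurableSet_le measurable_fst measurable_snd).inter
        (measurableSet_Ioc.prod measurableSet_Ioc))
    obtain ⟨hτs, ⟨hτ0, hτu⟩, -, hsu⟩ := hp
    simp only [Function.comp_apply, Prod.swap_prod_mk, Function.uncurry_apply_pair]
    rw [indicator_of_mem (show τ ∈ Ioc 0 u from ⟨hτ0, hτu⟩),
      indicator_of_mem (show s - τ ∈ Icc 0 u from ⟨sub_nonneg.2 hτs, by linarith⟩), mul_comm]
  have hslice : ∀ τ, (∫ r in 0..u - τ, k r) * g τ = ∫ s in τ..u, k (s - τ) * g τ := fun τ => by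
    rw [intervalIntegral.integral_mul_const, intervalIntegral.integral_comp_sub_right, sub_self]
  simp_rw [hslice]
  exact intervalIntegral_intervalIntegral_swap_triangle hu hint

theorem volterraConv_eq_integral_indicator {s T : ℝ} (hs : s ∈ Icc 0 T) :
    volterraConv k g s = ∫ r in 0..T, (Iic s).indicator (fun r => k r * g (s - r)) r := by
  have hreflect :=
    intervalIntegral.integral_comp_sub_left (fun r => k r * g (s - r)) s (a := 0) (b := s)
  simp only [sub_sub_cancel, sub_self, sub_zero] at hreflect
  rw [volterraConv, hreflect]
  exact (intervalIntegral.integral_indicator hs).symm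

theorem norm_indicator_mul_comp_sub_le {s r T B : ℝ} (hB : ∀ x ∈ Icc (-T) T, ‖g x‖ ≤ B)
    (hs : s ∈ Icc 0 T) (hr : r ∈ Ioc 0 T) :
    ‖(Iic s).indicator (fun r => k r * g (s - r)) r‖ ≤ ‖k r‖ * B := by
  refine (norm_indicator_le_norm_self _ _).trans ?_
  rw [norm_mul]
  exact mul_le_mul_of_nonneg_left (hB _ ⟨by linarith [hr.2, hs.1], by linarith [hr.1, hs.2]⟩)
    (norm_nonneg _)

theorem continuousAt_volterraConv {T s₀ : ℝ} (hk : IntegrableOn k (Ioc 0 T))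
    (hg : Continuous g) (hs₀ : s₀ ∈ Ioo 0 T) : ContinuousAt (volterraConv k g) s₀ := by
  have hT : 0 ≤ T := hs₀.1.le.trans hs₀.2.le
  obtain ⟨B, hB⟩ := (isCompact_Icc (a := -T) (b := T)).exists_bound_of_continuousOn hg.continuousOn
  refine ContinuousAt.congr ?_ (Filter.eventuallyEq_of_mem (Icc_mem_nhds hs₀.1 hs₀.2)
    fun s hs => (volterraConv_eq_integral_indicator hs).symm)
  refine intervalIntegral.continuousAt_of_dominated_interval (bound := fun r => ‖k r‖ * B)
    (.of_forall fun s => ?_) (Filter.eventually_of_mem (Icc_mem_nhds hs₀.1 hs₀.2) fun s hs => ?_)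
    ((intervalIntegrable_iff_integrableOn_Ioc_of_le hT).2 (hk.norm.mul_const B)) ?_
  · rw [uIoc_of_le hT]
    exact (hk.aestronglyMeasurable.mul
      (hg.comp (continuous_sub_left s)).aestronglyMeasurable).indicator measurableSet_Iic
  · refine .of_forall fun r hr => ?_
    rw [uIoc_of_le hT] at hr
    exact norm_indicator_mul_comp_sub_le hB hs hr
  · filter_upwards [Measure.ae_ne volume s₀] with r hr _
    have hcont : Continuous fun s => k r * g (s - r) := by fun_prop
    exact hcont.continuousOn.continuousAt_indicator (s := Ici r)
      (by rw [frontier_Ici]; exact hr.symm)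

theorem intervalIntegrable_volterraConv {T u : ℝ} (hk : IntegrableOn k (Ioc 0 T))
    (hg : Continuous g) (hu : u ∈ Ico 0 T) : IntervalIntegrable (volterraConv k g) volume 0 u := by
  have hT : 0 ≤ T := hu.1.trans hu.2.le
  obtain ⟨B, hB⟩ := (isCompact_Icc (a := -T) (b := T)).exists_bound_of_continuousOn hg.continuousOn
  have hcont : ContinuousOn (volterraConv k g) (Ioc 0 u) := fun s hs =>
    (continuousAt_volterraConv hk hg ⟨hs.1, hs.2.trans_lt hu.2⟩).continuousWithinAt
  rw [intervalIntegrable_iff_integrableOn_Ioc_of_le hu.1]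
  refine IntegrableOn.of_bound measure_Ioc_lt_top
    (hcont.aestronglyMeasurable measurableSet_Ioc) (∫ r in 0..T, ‖k r‖ * B) ?_
  filter_upwards [ae_restrict_mem measurableSet_Ioc] with s hs
  have hs' : s ∈ Icc 0 T := ⟨hs.1.le, hs.2.trans hu.2.le⟩
  rw [volterraConv_eq_integral_indicator hs']
  exact intervalIntegral.norm_integral_le_of_norm_le hT
    (.of_forall fun r hr => norm_indicator_mul_comp_sub_le hB hs' hr)
    ((intervalIntegrable_iff_integrableOn_Ioc_of_le hT).2 (hk.norm.mul_const B))

variable {K K' : ℝ → ℝ} {T t : ℝ}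

theorem volterraConv_eq_integral_add_integral_volterraConv
    (hKc : ContinuousOn K (Ici 0)) (hK : ∀ s > 0, HasDerivAt K (K' s) s)
    (hK' : IntegrableOn K' (Ioc 0 T)) (hg : Continuous g) {u : ℝ} (hu : u ∈ Icc 0 T) :
    volterraConv K g u = K 0 * (∫ τ in 0..u, g τ) + ∫ s in 0..u, volterraConv K' g s := by
  have hK'u : IntegrableOn K' (Ioc 0 u) := hK'.mono_set (Ioc_subset_Ioc_right hu.2)
  have hprimitive : ∀ τ ∈ uIcc 0 u,
      (∫ r in 0..u - τ, K' r) * g τ = K (u - τ) * g τ - K 0 * g τ := by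
    intro τ hτ
    rw [uIcc_of_le hu.1] at hτ
    rw [intervalIntegral.integral_eq_sub_of_hasDerivAt_of_le (sub_nonneg.2 hτ.2)
      (hKc.mono Icc_subset_Ici_self) (fun x hx => hK x hx.1)
      ((intervalIntegrable_iff_integrableOn_Ioc_of_le (sub_nonneg.2 hτ.2)).2
        (hK'u.mono_set (Ioc_subset_Ioc_right (by linarith [hτ.1])))), sub_mul]
  have hKg : IntervalIntegrable (fun τ => K (u - τ) * g τ) volume 0 u := by
    refine ContinuousOn.intervalIntegrable ((hKc.comp (continuousOn_const.sub continuousOn_id)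
      fun τ hτ => ?_).mul hg.continuousOn)
    rw [uIcc_of_le hu.1] at hτ
    exact sub_nonneg.2 hτ.2
  rw [← integral_primitive_mul_eq_integral_volterraConv hu.1 hK'u hg.integrableOn_Ioc,
    intervalIntegral.integral_congr hprimitive, intervalIntegral.integral_sub hKg
      ((hg.intervalIntegrable 0 u).const_mul _), intervalIntegral.integral_const_mul, volterraConv]
  ring

theorem hasDerivAt_volterraConv_of_continuous (hKc : ContinuousOn K (Ici 0))
    (hK : ∀ s > 0, HasDerivAt K (K' s) s) (hK' : IntegrableOn K' (Ioc 0 T)) (hg : Continuous g)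
    (ht : t ∈ Ioo 0 T) :
    HasDerivAt (volterraConv K g) (K 0 * g t + volterraConv K' g t) t := by
  have hH : HasDerivAt (fun u => ∫ s in 0..u, volterraConv K' g s) (volterraConv K' g t) t :=
    intervalIntegral.integral_hasDerivAt_right
      (intervalIntegrable_volterraConv hK' hg ⟨ht.1.le, ht.2⟩)
      (ContinuousOn.stronglyMeasurableAtFilter isOpen_Ioo
        (fun s hs => (continuousAt_volterraConv hK' hg hs).continuousWithinAt) t ht)
      (continuousAt_volterraConv hK' hg ht)
  have hprimitive : HasDerivAt (fun u => ∫ τ in 0..u, g τ) (g t) t :=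
    (hg.integral_hasStrictDerivAt 0 t).hasDerivAt
  exact ((hprimitive.const_mul (K 0)).add hH).congr_of_eventuallyEq
    (Filter.eventuallyEq_of_mem (Icc_mem_nhds ht.1 ht.2) fun u hu =>
      volterraConv_eq_integral_add_integral_volterraConv hKc hK hK' hg hu)

theorem hasDerivAt_volterraConv (hKc : ContinuousOn K (Ici 0))
    (hK : ∀ s > 0, HasDerivAt K (K' s) s) (hK' : IntegrableOn K' (Ioc 0 T))
    (hg : ContinuousOn g (Icc 0 T)) (ht : t ∈ Ioo 0 T) :
    HasDerivAt (volterraConv K g) (K 0 * g t + volterraConv K' g t) t := by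
  have hT : 0 ≤ T := ht.1.le.trans ht.2.le
  set ĝ := IccExtend hT ((Icc 0 T).domRestrict g)
  have hĝ : ∀ x ∈ Icc 0 T, ĝ x = g x := fun x hx => IccExtend_of_mem hT _ hx
  have hconv : ∀ k, ∀ u ∈ Icc 0 T, volterraConv k ĝ u = volterraConv k g u := fun k u hu =>
    intervalIntegral.integral_congr fun τ hτ => by
      rw [uIcc_of_le hu.1] at hτ
      rw [hĝ τ ⟨hτ.1, hτ.2.trans hu.2⟩]
  have hĝc : Continuous ĝ := hg.domRestrict.Icc_extend'
  have h := hasDerivAt_volterraConv_of_continuous hKc hK hK' hĝc ht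
  rw [hĝ t (Ioo_subset_Icc_self ht), hconv K' t (Ioo_subset_Icc_self ht)] at h
  exact h.congr_of_eventuallyEq
    (Filter.eventuallyEq_of_mem (Icc_mem_nhds ht.1 ht.2) fun u hu => (hconv K u hu).symm)

end VolterraConv

theorem summable_one_div_two_mul_add_one_sq :
    Summable fun n : ℕ => 1 / (2 * (n : ℝ) + 1) ^ 2 := by
  have h := (Real.summable_one_div_nat_pow (p := 2)).2 one_lt_two
  simpa [Function.comp_def] using h.comp_injective (i := fun n : ℕ => 2 * n + 1)
    fun a b hab => by simpa using hab

theorem tsum_one_div_two_mul_add_one_sq :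
    ∑' n : ℕ, 1 / (2 * (n : ℝ) + 1) ^ 2 = π ^ 2 / 8 := by
  have h := (Real.summable_one_div_nat_pow (p := 2)).2 one_lt_two
  have heven : ∀ k : ℕ, 1 / ((2 * k : ℕ) : ℝ) ^ 2 = 1 / 4 * (1 / (k : ℝ) ^ 2) := fun k => by
    push_cast; ring
  have hsplit := tsum_even_add_odd (f := fun n : ℕ => 1 / (n : ℝ) ^ 2)
    (by simpa only [heven] using h.mul_left (1 / 4))
    (by simpa using summable_one_div_two_mul_add_one_sq)
  simp only [heven, tsum_mul_left, hasSum_zeta_two.tsum_eq] at hsplit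
  push_cast at hsplit
  linarith

theorem exp_neg_le_one_div {x : ℝ} (hx : 0 < x) : exp (-x) ≤ 1 / x := by
  rw [exp_neg, one_div]
  exact inv_anti₀ hx (by linarith [add_one_le_exp x])

theorem antitone_exp_mode {ν : ℝ} (hν : 0 ≤ ν) (n : ℕ) :
    Antitone fun t => exp (-ν * (2 * (n : ℝ) + 1) ^ 2 * π ^ 2 * t) := fun s t hst =>
  exp_le_exp.2 <| mul_le_mul_of_nonpos_left hst <| by
    have := mul_nonneg (mul_nonneg hν (sq_nonneg (2 * (n : ℝ) + 1))) (sq_nonneg π)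
    linarith

theorem summable_exp_mode {ν t : ℝ} (hν : 0 < ν) (ht : 0 < t) :
    Summable fun n : ℕ => exp (-ν * (2 * (n : ℝ) + 1) ^ 2 * π ^ 2 * t) := by
  refine (summable_one_div_two_mul_add_one_sq.mul_left (1 / (ν * π ^ 2 * t))).of_nonneg_of_le
    (fun n => (exp_pos _).le) fun n => ?_
  have hx : 0 < ν * π ^ 2 * t * (2 * (n : ℝ) + 1) ^ 2 := by positivity
  calc exp (-ν * (2 * (n : ℝ) + 1) ^ 2 * π ^ 2 * t)
      = exp (-(ν * π ^ 2 * t * (2 * (n : ℝ) + 1) ^ 2)) := by ring_nf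
    _ ≤ 1 / (ν * π ^ 2 * t * (2 * (n : ℝ) + 1) ^ 2) := exp_neg_le_one_div hx
    _ = 1 / (ν * π ^ 2 * t) * (1 / (2 * (n : ℝ) + 1) ^ 2) := by rw [one_div_mul_one_div]

theorem norm_fluxKernel_term_le {ν t : ℝ} (hν : 0 ≤ ν) (ht : 0 ≤ t) (n : ℕ) :
    ‖1 / (2 * (n : ℝ) + 1) ^ 2 * exp (-ν * (2 * (n : ℝ) + 1) ^ 2 * π ^ 2 * t)‖
      ≤ 1 / (2 * (n : ℝ) + 1) ^ 2 := by
  rw [norm_mul, norm_of_nonneg (by positivity), norm_of_nonneg (exp_pos _).le]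
  refine mul_le_of_le_one_right (by positivity) ?_
  simpa using antitone_exp_mode hν n ht

theorem continuousOn_fluxKernel {ν : ℝ} (hν : 0 ≤ ν) : ContinuousOn (fluxKernel ν) (Ici 0) :=
  continuousOn_const.mul <| continuousOn_tsum (fun n => by fun_prop)
    summable_one_div_two_mul_add_one_sq fun n _ ht => norm_fluxKernel_term_le hν ht n

theorem hasDerivAt_fluxKernel {ν t : ℝ} (hν : 0 < ν) (ht : 0 < t) :
    HasDerivAt (fluxKernel ν) (kernelDeriv ν t) t := by
  have hseries : HasDerivAt
      (fun y => ∑' n : ℕ, 1 / (2 * (n : ℝ) + 1) ^ 2 * exp (-ν * (2 * (n : ℝ) + 1) ^ 2 * π ^ 2 * y))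
      (∑' n : ℕ, -(ν * π ^ 2) * exp (-ν * (2 * (n : ℝ) + 1) ^ 2 * π ^ 2 * t)) t := by
    refine hasDerivAt_tsum_of_isPreconnected (t := Ioi (t / 2))
      (g' := fun (n : ℕ) y => -(ν * π ^ 2) * exp (-ν * (2 * (n : ℝ) + 1) ^ 2 * π ^ 2 * y))
      ((summable_exp_mode hν (half_pos ht)).mul_left (ν * π ^ 2))
      isOpen_Ioi isPreconnected_Ioi (fun n y _ => ?_) (fun n y hy => ?_) (half_lt_self ht)
      (summable_one_div_two_mul_add_one_sq.of_norm_bounded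
        (norm_fluxKernel_term_le hν.le ht.le)) (half_lt_self ht)
    · have hmode : HasDerivAt (fun y => -ν * (2 * (n : ℝ) + 1) ^ 2 * π ^ 2 * y)
          (-ν * (2 * (n : ℝ) + 1) ^ 2 * π ^ 2) y := by
        simpa only [mul_one] using
          (hasDerivAt_id' y).const_mul (-ν * (2 * (n : ℝ) + 1) ^ 2 * π ^ 2)
      refine (hmode.exp.const_mul (1 / (2 * (n : ℝ) + 1) ^ 2)).congr_deriv ?_
      field_simp
    · rw [norm_mul, norm_neg, norm_of_nonneg (by positivity), norm_of_nonneg (exp_pos _).le]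
      exact mul_le_mul_of_nonneg_left (antitone_exp_mode hν.le n (le_of_lt hy)) (by positivity)
  refine (hseries.const_mul (8 / π ^ 2)).congr_deriv ?_
  rw [kernelDeriv, tsum_mul_left, ← mul_assoc]
  congr 1
  field_simp

theorem kernelDeriv_nonpos {ν : ℝ} (hν : 0 ≤ ν) (t : ℝ) : kernelDeriv ν t ≤ 0 :=
  mul_nonpos_of_nonpos_of_nonneg (by linarith) (tsum_nonneg fun n => (exp_pos _).le)

theorem integrableOn_kernelDeriv {ν : ℝ} (hν : 0 < ν) (T : ℝ) :
    IntegrableOn (kernelDeriv ν) (Ioc 0 T) := by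
  simpa using (intervalIntegral.integrableOn_deriv_of_nonneg
    ((continuousOn_fluxKernel hν.le).mono Icc_subset_Ici_self).neg
    (fun t ht => (hasDerivAt_fluxKernel hν ht.1).neg)
    (fun t _ => neg_nonneg.2 (kernelDeriv_nonpos hν.le t))).neg

theorem stmt_12_general (ν T L γ : ℝ) (hν : 0 < ν) (hγ₀ : 0 < γ) (f : ℝ → ℝ)
    (hf : ∀ t₁ ∈ Icc (0:ℝ) T, ∀ t₂ ∈ Icc (0:ℝ) T, |f t₁ - f t₂| ≤ L * |t₁ - t₂| ^ γ) :
    ∀ t ∈ Ioo (0:ℝ) T,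
      HasDerivAt (fun u => ∫ τ in (0:ℝ)..u, fluxKernel ν (u - τ) * f τ)
        (f t + ∫ τ in (0:ℝ)..t, kernelDeriv ν (t - τ) * f τ) t := by
  intro t ht
  have hcont : ContinuousOn f (Icc 0 T) :=
    continuousOn_of_dist_le_rpow hγ₀ (by simpa only [Real.dist_eq] using hf)
  have h := hasDerivAt_volterraConv (continuousOn_fluxKernel hν.le)
    (fun s hs => hasDerivAt_fluxKernel hν hs) (integrableOn_kernelDeriv hν T) hcont ht
  rwa [fluxKernel_zero, one_mul] at h

/-- If `f` is uniformly `γ`-Hölder on `[0,T]` with `0 < γ < 1/2`, then the flux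
`𝓕(t) = ∫₀ᵗ 𝔥(t-τ)f(τ)dτ` is differentiable on `(0,T)` with
`𝓕'(t) = f(t) + ∫₀ᵗ 𝔥'(t-τ)f(τ)dτ`. -/
theorem stmt_12 (ν T L γ : ℝ) (hν : 0 < ν) (hT : 0 < T) (hL : 0 < L)
    (hγ₀ : 0 < γ) (hγ : γ < 1/2) (f : ℝ → ℝ)
    (hf : ∀ t₁ ∈ Icc (0:ℝ) T, ∀ t₂ ∈ Icc (0:ℝ) T, |f t₁ - f t₂| ≤ L * |t₁ - t₂| ^ γ) :
    ∀ t ∈ Ioo (0:ℝ) T,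
      HasDerivAt (fun u => ∫ τ in (0:ℝ)..u, fluxKernel ν (u - τ) * f τ)
        (f t + ∫ τ in (0:ℝ)..t, kernelDeriv ν (t - τ) * f τ) t :=
  stmt_12_general ν T L γ hν hγ₀ f hf
end

section
/- For every smooth compactly supported function φ : ℝ² → ℝ, ∫_{ℝ²} |φ(x)|⁴ dx ≤ 2 (∫_{ℝ²} |φ(x)|² dx) (∫_{ℝ²} |∇φ(x)|² dx). -/
open MeasureTheory

lemma my_cs {α : Type*} [MeasurableSpace α] (μ : Measure α) (f g : α → ℝ)
    (hf2 : Integrable (fun x => f x ^ 2) μ) (hg2 : Integrable (fun x => g x ^ 2) μ)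
    (hfg : Integrable (fun x => f x * g x) μ) :
    (∫ x, f x * g x ∂μ) ^ 2 ≤ (∫ x, f x ^ 2 ∂μ) * ∫ x, g x ^ 2 ∂μ := by
  set X := ∫ x, f x * g x ∂μ with hX
  set A := ∫ x, f x ^ 2 ∂μ with hA
  set B := ∫ x, g x ^ 2 ∂μ with hB
  have key : ∀ c : ℝ, 0 ≤ A * (c * c) + (-2 * X) * c + B := by
    intro c
    have h1 : ∀ x, (0:ℝ) ≤ c^2 * f x ^2 + (-2*c) * (f x * g x) + g x ^2 := by
      intro x; nlinarith [sq_nonneg (c * f x - g x)]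
    have h2 : 0 ≤ ∫ x, (c^2 * f x ^2 + (-2*c) * (f x * g x) + g x ^2) ∂μ :=
      integral_nonneg h1
    have hsum : Integrable (fun x => c^2 * f x ^2 + -2*c * (f x * g x)) μ :=
      (hf2.const_mul (c^2)).add (hfg.const_mul (-2*c))
    rw [integral_add hsum hg2, integral_add (hf2.const_mul (c^2)) (hfg.const_mul (-2*c)),
        integral_const_mul, integral_const_mul] at h2
    nlinarith [h2]
  have := discrim_le_zero key
  rw [discrim] at this
  nlinarith [this]

lemma my_opnorm (L : EuclideanSpace ℝ (Fin 2) →L[ℝ] ℝ) :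
    L (EuclideanSpace.single 0 1) ^ 2 + L (EuclideanSpace.single 1 1) ^ 2 ≤ ‖L‖ ^ 2 := by
  set c0 := L (EuclideanSpace.single 0 1) with hc0
  set c1 := L (EuclideanSpace.single 1 1) with hc1
  set w : EuclideanSpace ℝ (Fin 2) :=
    c0 • EuclideanSpace.single 0 1 + c1 • EuclideanSpace.single 1 1 with hw
  have hLw : L w = c0 ^ 2 + c1 ^ 2 := by
    simp [hw, _root_.map_add, _root_.map_smul]; ring
  have hwn : ‖w‖ = Real.sqrt (c0 ^ 2 + c1 ^ 2) := by
    rw [EuclideanSpace.norm_eq]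
    congr 1
    rw [Fin.sum_univ_two]
    simp [hw, EuclideanSpace.single_apply]
  have hS : (0:ℝ) ≤ c0 ^ 2 + c1 ^ 2 := by positivity
  have h1 : c0 ^ 2 + c1 ^ 2 ≤ ‖L‖ * Real.sqrt (c0 ^ 2 + c1 ^ 2) := by
    calc c0 ^2 + c1 ^2 = L w := hLw.symm
      _ ≤ |L w| := le_abs_self _
      _ ≤ ‖L‖ * ‖w‖ := L.le_opNorm w
      _ = _ := by rw [hwn]
  nlinarith [sq_nonneg (‖L‖ - Real.sqrt (c0^2 + c1^2)), Real.sq_sqrt hS, norm_nonneg L]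

lemma my_slice1 {h : ℝ × ℝ → ℝ} (hh : HasCompactSupport h) (b : ℝ) :
    HasCompactSupport (fun t => h (t, b)) := by
  apply HasCompactSupport.intro (hh.image continuous_fst)
  intro t ht
  by_contra hne
  exact ht ⟨(t, b), subset_tsupport h hne, rfl⟩

lemma my_slice2 {h : ℝ × ℝ → ℝ} (hh : HasCompactSupport h) (a : ℝ) :
    HasCompactSupport (fun s => h (a, s)) := by
  apply HasCompactSupport.intro (hh.image continuous_snd)
  intro s hs
  by_contra hne
  exact hs ⟨(a, s), subset_tsupport h hne, rfl⟩

lemma my_fubini (ψ u w : ℝ × ℝ → ℝ) (hψc : Continuous ψ) (hψs : HasCompactSupport ψ)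
    (hu : Continuous u) (hw : Continuous w)
    (hus : HasCompactSupport u) (hws : HasCompactSupport w)
    (hu0 : ∀ p, 0 ≤ u p) (hw0 : ∀ p, 0 ≤ w p)
    (key1 : ∀ a b : ℝ, ψ (a, b) ^ 2 ≤ ∫ t, u (t, b))
    (key2 : ∀ a b : ℝ, ψ (a, b) ^ 2 ≤ ∫ s, w (a, s)) :
    ∫ p, ψ p ^ 4 ≤ (∫ p, w p) * ∫ p, u p := by
  have iψ4 : Integrable (fun p => ψ p ^ 4) :=
    (hψc.pow 4).integrable_of_hasCompactSupport (hψs.comp_left (g := (· ^ 4)) (by norm_num) : HasCompactSupport (fun p => ψ p ^ 4))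
  have iu : Integrable u := hu.integrable_of_hasCompactSupport hus
  have iw : Integrable w := hw.integrable_of_hasCompactSupport hws
  have hWnn : (0:ℝ) ≤ ∫ p, w p := integral_nonneg hw0
  have hUnn : (0:ℝ) ≤ ∫ p, u p := integral_nonneg hu0
  have hwm : Measurable fun q : ℝ × ℝ => ENNReal.ofReal (w q) :=
    ENNReal.measurable_ofReal.comp hw.measurable
  have hum : Measurable fun q : ℝ × ℝ => ENNReal.ofReal (u q) :=
    ENNReal.measurable_ofReal.comp hu.measurable
  have hfm : Measurable fun a : ℝ => ∫⁻ s, ENNReal.ofReal (w (a, s)) :=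
    Measurable.lintegral_prod_right' hwm
  have hgm : Measurable fun b : ℝ => ∫⁻ t, ENNReal.ofReal (u (t, b)) :=
    Measurable.lintegral_prod_right' (hum.comp measurable_swap)
  have h0 : ENNReal.ofReal (∫ p, ψ p ^ 4) ≤ ENNReal.ofReal ((∫ p, w p) * ∫ p, u p) := by
    rw [ofReal_integral_eq_lintegral_ofReal iψ4 (.of_forall fun p => by positivity)]
    calc ∫⁻ p, ENNReal.ofReal (ψ p ^ 4)
        ≤ ∫⁻ p : ℝ × ℝ, (∫⁻ s, ENNReal.ofReal (w (p.1, s))) *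
            ∫⁻ t, ENNReal.ofReal (u (t, p.2)) := by
          refine lintegral_mono fun p => ?_
          have iws : Integrable (fun s => w (p.1, s)) :=
            (hw.comp (continuous_const.prodMk continuous_id)).integrable_of_hasCompactSupport
              (by
                apply HasCompactSupport.intro (hws.image continuous_snd)
                intro s hs
                by_contra hne
                exact hs ⟨(p.1, s), subset_tsupport w hne, rfl⟩)
          have ius : Integrable (fun t => u (t, p.2)) :=
            (hu.comp (continuous_id.prodMk continuous_const)).integrable_of_hasCompactSupport
              (by
                apply HasCompactSupport.intro (hus.image continuous_fst)
                intro t ht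
                by_contra hne
                exact ht ⟨(t, p.2), subset_tsupport u hne, rfl⟩)
          have e1 : ENNReal.ofReal (ψ p ^ 4) =
              ENNReal.ofReal (ψ p ^ 2) * ENNReal.ofReal (ψ p ^ 2) := by
            rw [← ENNReal.ofReal_mul (sq_nonneg _)]; ring_nf
          rw [e1]
          have b1 : ENNReal.ofReal (ψ p ^ 2) ≤ ∫⁻ s, ENNReal.ofReal (w (p.1, s)) := by
            rw [← ofReal_integral_eq_lintegral_ofReal iws (.of_forall fun s => hw0 _)]
            exact ENNReal.ofReal_le_ofReal (by simpa using key2 p.1 p.2)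
          have b2 : ENNReal.ofReal (ψ p ^ 2) ≤ ∫⁻ t, ENNReal.ofReal (u (t, p.2)) := by
            rw [← ofReal_integral_eq_lintegral_ofReal ius (.of_forall fun t => hu0 _)]
            exact ENNReal.ofReal_le_ofReal (by simpa using key1 p.1 p.2)
          exact mul_le_mul' b1 b2
      _ = (∫⁻ a, ∫⁻ s, ENNReal.ofReal (w (a, s))) *
            ∫⁻ b, ∫⁻ t, ENNReal.ofReal (u (t, b)) := by
          rw [Measure.volume_eq_prod]
          exact lintegral_prod_mul hfm.aemeasurable hgm.aemeasurable
      _ = (∫⁻ p, ENNReal.ofReal (w p)) * ∫⁻ p, ENNReal.ofReal (u p) := by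
          congr 1
          · rw [Measure.volume_eq_prod, lintegral_prod _ hwm.aemeasurable]
          · rw [Measure.volume_eq_prod, lintegral_prod _ hum.aemeasurable,
              lintegral_lintegral_swap (f := fun b t => ENNReal.ofReal (u (t, b))) (by exact (hum.comp measurable_swap).aemeasurable)]
      _ = ENNReal.ofReal ((∫ p, w p) * ∫ p, u p) := by
          rw [← ofReal_integral_eq_lintegral_ofReal iw (.of_forall hw0),
            ← ofReal_integral_eq_lintegral_ofReal iu (.of_forall hu0),
            ← ENNReal.ofReal_mul hWnn]
  exact (ENNReal.ofReal_le_ofReal_iff (mul_nonneg hWnn hUnn)).1 h0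

noncomputable def myT : (ℝ × ℝ) ≃L[ℝ] EuclideanSpace ℝ (Fin 2) :=
  (ContinuousLinearEquiv.finTwoArrow ℝ ℝ).symm.trans
    (PiLp.continuousLinearEquiv 2 ℝ (fun _ : Fin 2 => ℝ)).symm

lemma myT_mp : MeasurePreserving (⇑myT) volume volume := by
  have hcoe : ⇑(MeasurableEquiv.finTwoArrow.symm.trans
      (MeasurableEquiv.toLp 2 (Fin 2 → ℝ)) : (ℝ × ℝ) ≃ᵐ EuclideanSpace ℝ (Fin 2))
      = ⇑myT := by
    funext p
    show (MeasurableEquiv.toLp 2 (Fin 2 → ℝ)) (Fin.cons p.1 (Fin.cons p.2 finZeroElim)) =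
      (WithLp.equiv 2 (Fin 2 → ℝ)).symm ![p.1, p.2]
    rw [MeasurableEquiv.coe_toLp]
    exact congrArg _ (by funext i; fin_cases i <;> rfl)
  have h : MeasurePreserving (MeasurableEquiv.finTwoArrow.symm.trans
      (MeasurableEquiv.toLp 2 (Fin 2 → ℝ)) : (ℝ × ℝ) ≃ᵐ EuclideanSpace ℝ (Fin 2))
      volume volume :=
    ((EuclideanSpace.volume_preserving_symm_measurableEquiv_toLp (Fin 2)).symm).comp
      ((volume_preserving_finTwoArrow ℝ).symm)
  exact hcoe ▸ h

lemma myT_me : MeasurableEmbedding (⇑myT) :=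
  myT.toHomeomorph.measurableEmbedding

lemma myT_e1 : myT (1, 0) = EuclideanSpace.single (0 : Fin 2) (1 : ℝ) := by
  ext i; fin_cases i <;> rfl

lemma myT_e2 : myT (0, 1) = EuclideanSpace.single (1 : Fin 2) (1 : ℝ) := by
  ext i; fin_cases i <;> rfl

/-- The two-dimensional Ladyzhenskaya inequality
`‖φ‖⁴_{L⁴(ℝ²)} ≤ 2 ‖φ‖²_{L²(ℝ²)} ‖∇φ‖²_{L²(ℝ²)}` for smooth compactly supported `φ`. -/
theorem stmt_15 (φ : EuclideanSpace ℝ (Fin 2) → ℝ)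
    (hsmooth : ContDiff ℝ (⊤ : ℕ∞) φ) (hsupp : HasCompactSupport φ) :
    ∫ x, |φ x| ^ 4 ≤ 2 * (∫ x, |φ x| ^ 2) * ∫ x, ‖fderiv ℝ φ x‖ ^ 2 := by
  set ψ : ℝ × ℝ → ℝ := fun p => φ (myT p) with hψdef
  have hψ : ContDiff ℝ (⊤ : ℕ∞) ψ := hsmooth.comp myT.contDiff
  have hψc : Continuous ψ := hψ.continuous
  have hψs : HasCompactSupport ψ := hsupp.comp_homeomorph myT.toHomeomorph
  set D1 : ℝ × ℝ → ℝ := fun p => fderiv ℝ ψ p (1, 0) with hD1def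
  set D2 : ℝ × ℝ → ℝ := fun p => fderiv ℝ ψ p (0, 1) with hD2def
  have hD1c : Continuous D1 := (hψ.continuous_fderiv (by simp)).clm_apply continuous_const
  have hD2c : Continuous D2 := (hψ.continuous_fderiv (by simp)).clm_apply continuous_const
  have hD1s : HasCompactSupport D1 := hψs.fderiv_apply ℝ (1, 0)
  have hD2s : HasCompactSupport D2 := hψs.fderiv_apply ℝ (0, 1)
  -- transfer the three integrals to ℝ × ℝ
  have t4 : ∫ p, |ψ p| ^ 4 = ∫ x, |φ x| ^ 4 :=
    myT_mp.integral_comp myT_me (fun x => |φ x| ^ 4)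
  have t2 : ∫ p, |ψ p| ^ 2 = ∫ x, |φ x| ^ 2 :=
    myT_mp.integral_comp myT_me (fun x => |φ x| ^ 2)
  have tC : ∫ p, ‖fderiv ℝ φ (myT p)‖ ^ 2 = ∫ x, ‖fderiv ℝ φ x‖ ^ 2 :=
    myT_mp.integral_comp myT_me (fun x => ‖fderiv ℝ φ x‖ ^ 2)
  rw [← t4, ← t2, ← tC]
  have habs4 : ∀ a : ℝ, |a| ^ 4 = a ^ 4 := fun a => by
    rw [← abs_pow]; exact abs_of_nonneg (by positivity)
  simp_rw [habs4, sq_abs]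
  -- integrability facts
  have iψ2 : Integrable (fun p => ψ p ^ 2) :=
    (hψc.pow 2).integrable_of_hasCompactSupport (hψs.comp_left (g := (· ^ 2)) (by norm_num) : HasCompactSupport (fun p => ψ p ^ 2))
  have iD1sq : Integrable (fun p => D1 p ^ 2) :=
    (hD1c.pow 2).integrable_of_hasCompactSupport (hD1s.comp_left (g := (· ^ 2)) (by norm_num) : HasCompactSupport (fun p => D1 p ^ 2))
  have iD2sq : Integrable (fun p => D2 p ^ 2) :=
    (hD2c.pow 2).integrable_of_hasCompactSupport (hD2s.comp_left (g := (· ^ 2)) (by norm_num) : HasCompactSupport (fun p => D2 p ^ 2))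
  have iψD1 : Integrable (fun p => |ψ p| * |D1 p|) :=
    ((hψc.abs).mul (hD1c.abs)).integrable_of_hasCompactSupport
      ((hψs.abs.mul_right) : HasCompactSupport _)
  have iψD2 : Integrable (fun p => |ψ p| * |D2 p|) :=
    ((hψc.abs).mul (hD2c.abs)).integrable_of_hasCompactSupport
      ((hψs.abs.mul_right) : HasCompactSupport _)
  have iC : Integrable (fun p => ‖fderiv ℝ φ (myT p)‖ ^ 2) := by
    have hc : Continuous (fun p : ℝ × ℝ => ‖fderiv ℝ φ (myT p)‖ ^ 2) :=
      (((hsmooth.continuous_fderiv (by simp)).comp myT.continuous).norm.pow 2)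
    refine hc.integrable_of_hasCompactSupport ?_
    have h1 : HasCompactSupport (fun p : ℝ × ℝ => fderiv ℝ φ (myT p)) :=
      (hsupp.fderiv ℝ).comp_homeomorph myT.toHomeomorph
    exact h1.comp_left (g := fun L : _ →L[ℝ] ℝ => ‖L‖ ^ 2) (by simp)
  -- the FTC pointwise bounds
  have key1 : ∀ a b : ℝ, ψ (a, b) ^ 2 ≤ ∫ t, |2 * ψ (t, b) * D1 (t, b)| := by
    intro a b
    have hslc : ContDiff ℝ 1 (fun t : ℝ => ψ (t, b)) :=
      (hψ.of_le (by simp)).comp (contDiff_prodMk_left b)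
    have hg1 : ContDiff ℝ 1 (fun t : ℝ => ψ (t, b) ^ 2) := hslc.pow 2
    have hgs : HasCompactSupport (fun t : ℝ => ψ (t, b) ^ 2) :=
      (my_slice1 hψs b).comp_left (g := (· ^ 2)) (by norm_num)
    have hder : ∀ t : ℝ, HasDerivAt (fun t : ℝ => ψ (t, b) ^ 2)
        (2 * ψ (t, b) * D1 (t, b)) t := by
      intro t
      have hf : HasFDerivAt ψ (fderiv ℝ ψ (t, b)) (t, b) :=
        (hψ.differentiable (by simp) (t, b)).hasFDerivAt
      have hco : HasDerivAt (fun t : ℝ => (t, b)) ((1 : ℝ), (0 : ℝ)) t :=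
        (hasDerivAt_id t).prodMk (hasDerivAt_const t b)
      have h1 : HasDerivAt (fun t : ℝ => ψ (t, b)) (D1 (t, b)) t := by
        have := hf.comp_hasDerivAt t hco; exact this
      simpa [mul_comm, mul_assoc, mul_left_comm] using h1.fun_pow 2
    have hderiv_eq : deriv (fun t : ℝ => ψ (t, b) ^ 2) = fun t => 2 * ψ (t, b) * D1 (t, b) :=
      funext fun t => (hder t).deriv
    have islc : Integrable (fun t => 2 * ψ (t, b) * D1 (t, b)) := by
      refine Continuous.integrable_of_hasCompactSupport ?_ ?_
      · exact (continuous_const.mul (hψc.comp (continuous_id.prodMk continuous_const))).mul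
          (hD1c.comp (continuous_id.prodMk continuous_const))
      · have : HasCompactSupport (fun p : ℝ × ℝ => 2 * ψ p * D1 p) :=
          ((hψs.mul_left).mul_right)
        exact my_slice1 this b
    have isla : Integrable (fun t => |2 * ψ (t, b) * D1 (t, b)|) := islc.abs
    calc ψ (a, b) ^ 2 = ∫ t in Set.Iic a, deriv (fun t : ℝ => ψ (t, b) ^ 2) t :=
          (hgs.integral_Iic_deriv_eq hg1 a).symm
      _ = ∫ t in Set.Iic a, 2 * ψ (t, b) * D1 (t, b) := by rw [hderiv_eq]
      _ ≤ ∫ t in Set.Iic a, |2 * ψ (t, b) * D1 (t, b)| :=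
          setIntegral_mono islc.integrableOn isla.integrableOn fun t => le_abs_self _
      _ ≤ ∫ t, |2 * ψ (t, b) * D1 (t, b)| :=
          setIntegral_le_integral isla (.of_forall fun t => abs_nonneg _)
  have key2 : ∀ a b : ℝ, ψ (a, b) ^ 2 ≤ ∫ s, |2 * ψ (a, s) * D2 (a, s)| := by
    intro a b
    have hslc : ContDiff ℝ 1 (fun s : ℝ => ψ (a, s)) :=
      (hψ.of_le (by simp)).comp (contDiff_prodMk_right a)
    have hg1 : ContDiff ℝ 1 (fun s : ℝ => ψ (a, s) ^ 2) := hslc.pow 2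
    have hgs : HasCompactSupport (fun s : ℝ => ψ (a, s) ^ 2) :=
      (my_slice2 hψs a).comp_left (g := (· ^ 2)) (by norm_num)
    have hder : ∀ s : ℝ, HasDerivAt (fun s : ℝ => ψ (a, s) ^ 2)
        (2 * ψ (a, s) * D2 (a, s)) s := by
      intro s
      have hf : HasFDerivAt ψ (fderiv ℝ ψ (a, s)) (a, s) :=
        (hψ.differentiable (by simp) (a, s)).hasFDerivAt
      have hco : HasDerivAt (fun s : ℝ => (a, s)) ((0 : ℝ), (1 : ℝ)) s :=
        (hasDerivAt_const s a).prodMk (hasDerivAt_id s)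
      have h1 : HasDerivAt (fun s : ℝ => ψ (a, s)) (D2 (a, s)) s := hf.comp_hasDerivAt s hco
      simpa [mul_comm, mul_assoc, mul_left_comm] using h1.fun_pow 2
    have hderiv_eq : deriv (fun s : ℝ => ψ (a, s) ^ 2) = fun s => 2 * ψ (a, s) * D2 (a, s) :=
      funext fun s => (hder s).deriv
    have islc : Integrable (fun s => 2 * ψ (a, s) * D2 (a, s)) := by
      refine Continuous.integrable_of_hasCompactSupport ?_ ?_
      · exact (continuous_const.mul (hψc.comp (continuous_const.prodMk continuous_id))).mul
          (hD2c.comp (continuous_const.prodMk continuous_id))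
      · have : HasCompactSupport (fun p : ℝ × ℝ => 2 * ψ p * D2 p) :=
          ((hψs.mul_left).mul_right)
        exact my_slice2 this a
    have isla : Integrable (fun s => |2 * ψ (a, s) * D2 (a, s)|) := islc.abs
    calc ψ (a, b) ^ 2 = ∫ s in Set.Iic b, deriv (fun s : ℝ => ψ (a, s) ^ 2) s :=
          (hgs.integral_Iic_deriv_eq hg1 b).symm
      _ = ∫ s in Set.Iic b, 2 * ψ (a, s) * D2 (a, s) := by rw [hderiv_eq]
      _ ≤ ∫ s in Set.Iic b, |2 * ψ (a, s) * D2 (a, s)| :=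
          setIntegral_mono islc.integrableOn isla.integrableOn fun s => le_abs_self _
      _ ≤ ∫ s, |2 * ψ (a, s) * D2 (a, s)| :=
          setIntegral_le_integral isla (.of_forall fun s => abs_nonneg _)
  -- Fubini step
  have hu : Continuous (fun p => |2 * ψ p * D1 p|) :=
    ((continuous_const.mul hψc).mul hD1c).abs
  have hw : Continuous (fun p => |2 * ψ p * D2 p|) :=
    ((continuous_const.mul hψc).mul hD2c).abs
  have hus : HasCompactSupport (fun p => |2 * ψ p * D1 p|) :=
    ((hψs.mul_left).mul_right).comp_left (g := abs) abs_zero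
  have hws : HasCompactSupport (fun p => |2 * ψ p * D2 p|) :=
    ((hψs.mul_left).mul_right).comp_left (g := abs) abs_zero
  have main : ∫ p, ψ p ^ 4 ≤ (∫ p, |2 * ψ p * D2 p|) * ∫ p, |2 * ψ p * D1 p| :=
    my_fubini ψ _ _ hψc hψs hu hw hus hws (fun p => abs_nonneg _) (fun p => abs_nonneg _)
      key1 key2
  -- simplify the right-hand side
  have habs : ∀ a b : ℝ, |2 * a * b| = 2 * (|a| * |b|) := by
    intro a b; rw [abs_mul, abs_mul]; simp [mul_assoc]
  simp_rw [habs] at main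
  rw [integral_const_mul, integral_const_mul] at main
  -- Cauchy–Schwarz
  have cs1 := my_cs volume (fun p => |ψ p|) (fun p => |D1 p|)
    (by simpa [sq_abs] using iψ2) (by simpa [sq_abs] using iD1sq) iψD1
  have cs2 := my_cs volume (fun p => |ψ p|) (fun p => |D2 p|)
    (by simpa [sq_abs] using iψ2) (by simpa [sq_abs] using iD2sq) iψD2
  simp_rw [sq_abs] at cs1 cs2
  -- gradient bound
  have hgrad : (∫ p, D1 p ^ 2) + (∫ p, D2 p ^ 2) ≤ ∫ p, ‖fderiv ℝ φ (myT p)‖ ^ 2 := by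
    rw [← integral_add iD1sq iD2sq]
    refine integral_mono (iD1sq.add iD2sq) iC fun p => ?_
    have hfd : fderiv ℝ ψ p = (fderiv ℝ φ (myT p)).comp (myT : (ℝ × ℝ) →L[ℝ] _) := by
      have : ψ = φ ∘ ⇑myT := rfl
      rw [hψdef]
      rw [show (fun p : ℝ × ℝ => φ (myT p)) = φ ∘ ⇑myT from rfl]
      rw [fderiv_comp p (hsmooth.differentiable (by simp) _) (myT.differentiableAt)]
      rw [myT.fderiv]
    have e1 : D1 p = fderiv ℝ φ (myT p) (EuclideanSpace.single 0 1) := by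
      rw [hD1def]; simp only []
      rw [hfd]; simp [myT_e1]
    have e2 : D2 p = fderiv ℝ φ (myT p) (EuclideanSpace.single 1 1) := by
      rw [hD2def]; simp only []
      rw [hfd]; simp [myT_e2]
    rw [e1, e2]
    exact my_opnorm _
  -- final arithmetic
  set Y1 := ∫ p, |ψ p| * |D1 p| with hY1
  set Y2 := ∫ p, |ψ p| * |D2 p| with hY2
  set A := ∫ p, ψ p ^ 2 with hA
  set B1 := ∫ p, D1 p ^ 2 with hB1
  set B2 := ∫ p, D2 p ^ 2 with hB2
  set C := ∫ p, ‖fderiv ℝ φ (myT p)‖ ^ 2 with hC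
  have hAnn : 0 ≤ A := integral_nonneg fun p => sq_nonneg _
  have hY1nn : 0 ≤ Y1 := integral_nonneg fun p => mul_nonneg (abs_nonneg _) (abs_nonneg _)
  have hY2nn : 0 ≤ Y2 := integral_nonneg fun p => mul_nonneg (abs_nonneg _) (abs_nonneg _)
  calc ∫ p, ψ p ^ 4 ≤ 2 * Y2 * (2 * Y1) := main
    _ ≤ 2 * A * C := by nlinarith [sq_nonneg (Y1 - Y2)]
end

section
/- Let ν > 0 and let z, x : ℝ² → ℝ² be smooth and compactly supported. With the trilinear form b(z,z,x) = Σ_{i,j=1}^{2} ∫_{ℝ²} zᵢ (∂ᵢ zⱼ) xⱼ dx, one has |b(z,z,x)| ≤ (ν/4) ‖∇z‖²_{L²(ℝ²)} + (27/(2ν³)) ‖z‖²_{L²(ℝ²)} ‖x‖⁴_{L⁴(ℝ²)}. -/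
open MeasureTheory

/-- The partial derivative `∂ᵢ vⱼ` of a planar vector field `v` at `x`. -/
noncomputable def pd (i j : Fin 2)
    (v : EuclideanSpace ℝ (Fin 2) → EuclideanSpace ℝ (Fin 2))
    (x : EuclideanSpace ℝ (Fin 2)) : ℝ :=
  fderiv ℝ (fun z => v z j) x (EuclideanSpace.single i 1)

/-- The Navier–Stokes inertia trilinear form
`b(u,v,φ) = Σᵢⱼ ∫_{ℝ²} uᵢ (∂ᵢvⱼ) φⱼ dx`. -/
noncomputable def triForm
    (u v φ : EuclideanSpace ℝ (Fin 2) → EuclideanSpace ℝ (Fin 2)) : ℝ :=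
  ∑ i : Fin 2, ∑ j : Fin 2, ∫ x, u x i * pd i j v x * φ x j

open Real

noncomputable abbrev E2' := EuclideanSpace ℝ (Fin 2)


lemma oneD_bound {g : ℝ → ℝ} (hg : ContDiff ℝ (⊤ : ℕ∞) g) (hs : HasCompactSupport g) (t : ℝ) :
    |g t| ≤ ∫ s, |deriv g s| := by
  have hder : Continuous (deriv g) := hg.continuous_deriv (by simp)
  have hint : Integrable (fun s => |deriv g s|) :=
    (hder.integrable_of_hasCompactSupport hs.deriv).abs
  obtain ⟨R, hR⟩ : ∃ R, tsupport g ⊆ Metric.closedBall 0 R :=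
    hs.isBounded.subset_closedBall 0
  set a := -(max R 0 + |t| + 1) with ha
  have hat : a ≤ t := by
    have h1 := abs_nonneg t; have h2 := neg_abs_le t
    have : (0:ℝ) ≤ max R 0 := le_max_right R 0
    nlinarith
  have hga : g a = 0 := by
    apply image_eq_zero_of_notMem_tsupport
    intro hmem
    have := hR hmem
    rw [Metric.mem_closedBall, dist_zero_right, Real.norm_eq_abs] at this
    have h1 : |a| = max R 0 + |t| + 1 := by
      rw [ha, abs_neg, abs_of_nonneg]; positivity
    have := le_max_left R 0
    nlinarith [abs_nonneg t]
  have hftc : ∫ s in a..t, deriv g s = g t - g a := by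
    apply intervalIntegral.integral_deriv_eq_sub
    · intro x _; exact (hg.differentiable (by simp)).differentiableAt
    · exact hder.intervalIntegrable a t
  calc |g t| = |∫ s in a..t, deriv g s| := by rw [hftc, hga, sub_zero]
    _ ≤ ∫ s in a..t, |deriv g s| := intervalIntegral.abs_integral_le_integral_abs hat
    _ = ∫ s in Set.Ioc a t, |deriv g s| := intervalIntegral.integral_of_le hat
    _ ≤ ∫ s, |deriv g s| := by
        apply setIntegral_le_integral hint
        filter_upwards with s using abs_nonneg _

noncomputable def psiE : (ℝ × ℝ) ≃L[ℝ] E2' :=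
  ((EuclideanSpace.equiv (Fin 2) ℝ).trans (ContinuousLinearEquiv.finTwoArrow ℝ ℝ)).symm

lemma psiE_mp : MeasurePreserving (⇑psiE) (volume : Measure (ℝ × ℝ)) (volume : Measure E2') := by
  have h1 := PiLp.volume_preserving_toLp (Fin 2)
  have h2 := (volume_preserving_finTwoArrow ℝ).symm
  have := h1.comp h2
  convert this using 1
  · rfl
  · rfl

lemma psiE_integral (φ : E2' → ℝ) : ∫ p : ℝ × ℝ, φ (psiE p) = ∫ q : E2', φ q :=
  psiE_mp.integral_comp (psiE.toHomeomorph.measurableEmbedding) φ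

lemma psiE_single0 : psiE (1, 0) = EuclideanSpace.single (0 : Fin 2) (1:ℝ) := by
  ext i
  fin_cases i <;> simp [psiE]

lemma psiE_single1 : psiE (0, 1) = EuclideanSpace.single (1 : Fin 2) (1:ℝ) := by
  ext i
  fin_cases i <;> simp [psiE]

lemma cs_sum {ι : Type*} (s : Finset ι) (u v : ι → ℝ) (hu : ∀ i, 0 ≤ u i) (hv : ∀ i, 0 ≤ v i) :
    ∑ i ∈ s, u i * v i ≤ Real.sqrt (∑ i ∈ s, (u i)^2) * Real.sqrt (∑ i ∈ s, (v i)^2) := by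
  have h := Finset.sum_mul_sq_le_sq_mul_sq s u v
  have h2 : (∑ i ∈ s, u i * v i) ≤ Real.sqrt ((∑ i ∈ s, (u i)^2) * (∑ i ∈ s, (v i)^2)) := by
    rw [show (∑ i ∈ s, (u i)^2) * (∑ i ∈ s, (v i)^2) = ((∑ i ∈ s, u i * v i))^2 + ((∑ i ∈ s, (u i)^2) * (∑ i ∈ s, (v i)^2) - ((∑ i ∈ s, u i * v i))^2) by ring]
    refine le_trans ?_ (Real.sqrt_le_sqrt (by nlinarith [h] : (∑ i ∈ s, u i * v i)^2 ≤ (∑ i ∈ s, u i * v i)^2 + ((∑ i ∈ s, (u i)^2) * (∑ i ∈ s, (v i)^2) - ((∑ i ∈ s, u i * v i))^2)))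
    rw [Real.sqrt_sq (Finset.sum_nonneg fun i _ => mul_nonneg (hu i) (hv i))]
  rw [← Real.sqrt_mul (Finset.sum_nonneg fun i _ => sq_nonneg (u i))]
  exact h2

lemma csL2 {f g : E2' → ℝ} (hf : Continuous f) (hg : Continuous g)
    (hfs : HasCompactSupport f) (hgs : HasCompactSupport g)
    (hf0 : ∀ p, 0 ≤ f p) (hg0 : ∀ p, 0 ≤ g p) :
    ∫ p, f p * g p ≤ Real.sqrt (∫ p, f p ^ 2) * Real.sqrt (∫ p, g p ^ 2) := by
  have hpq : (2:ℝ).HolderConjugate 2 := by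
    rw [Real.holderConjugate_iff_eq_conjExponent] <;> norm_num
  have hfm : MemLp f (ENNReal.ofReal 2) := hf.memLp_of_hasCompactSupport hfs
  have hgm : MemLp g (ENNReal.ofReal 2) := hg.memLp_of_hasCompactSupport hgs
  have h := integral_mul_le_Lp_mul_Lq_of_nonneg hpq
    (Filter.Eventually.of_forall hf0) (Filter.Eventually.of_forall hg0) hfm hgm
  have e1 : ∀ (h : E2' → ℝ), (∀ p, 0 ≤ h p) → ∫ p, h p ^ (2:ℝ) = ∫ p, h p ^ 2 := by
    intro h h0
    congr 1; funext p
    rw [show (2:ℝ) = ((2:ℕ):ℝ) by norm_num, Real.rpow_natCast]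
  rw [e1 f hf0, e1 g hg0] at h
  refine h.trans (le_of_eq ?_)
  rw [Real.sqrt_eq_rpow, Real.sqrt_eq_rpow]

lemma prod_L4 {F : ℝ × ℝ → ℝ} (hF : ContDiff ℝ (⊤ : ℕ∞) F) (hFs : HasCompactSupport F) :
    ∫ p, (F p)^2 ≤ (∫ p, |fderiv ℝ F p (1,0)|) * (∫ p, |fderiv ℝ F p (0,1)|) := by
  have hdF : Continuous (fderiv ℝ F) := hF.continuous_fderiv (by simp)
  set P1 : ℝ × ℝ → ℝ := fun p => |fderiv ℝ F p (1,0)| with hP1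
  set P2 : ℝ × ℝ → ℝ := fun p => |fderiv ℝ F p (0,1)| with hP2
  have hP1c : Continuous P1 := ((ContinuousLinearMap.apply ℝ ℝ ((1:ℝ),(0:ℝ))).continuous.comp hdF).abs
  have hP2c : Continuous P2 := ((ContinuousLinearMap.apply ℝ ℝ ((0:ℝ),(1:ℝ))).continuous.comp hdF).abs
  have hP1s : HasCompactSupport P1 :=
    (hFs.fderiv ℝ).comp_left (g := fun L : (ℝ×ℝ) →L[ℝ] ℝ => |L (1,0)|) (by simp)
  have hP2s : HasCompactSupport P2 :=
    (hFs.fderiv ℝ).comp_left (g := fun L : (ℝ×ℝ) →L[ℝ] ℝ => |L (0,1)|) (by simp)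
  have hP1i : Integrable P1 := hP1c.integrable_of_hasCompactSupport hP1s
  have hP2i : Integrable P2 := hP2c.integrable_of_hasCompactSupport hP2s
  -- slice derivative facts
  have hslice1 : ∀ b t, HasDerivAt (fun s => F (s, b)) (fderiv ℝ F (t, b) (1,0)) t := by
    intro b t
    have h1 : HasDerivAt (fun s : ℝ => (s, b)) ((1:ℝ),(0:ℝ)) t := by
      simpa using (hasDerivAt_id t).prodMk (hasDerivAt_const t b)
    exact ((hF.differentiable (by simp) (t,b)).hasFDerivAt.comp_hasDerivAt t h1)
  have hslice2 : ∀ a t, HasDerivAt (fun s => F (a, s)) (fderiv ℝ F (a, t) (0,1)) t := by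
    intro a t
    have h1 : HasDerivAt (fun s : ℝ => (a, s)) ((0:ℝ),(1:ℝ)) t := by
      simpa using (hasDerivAt_const t a).prodMk (hasDerivAt_id t)
    exact ((hF.differentiable (by simp) (a,t)).hasFDerivAt.comp_hasDerivAt t h1)
  -- compact support of slices
  have hsl1s : ∀ b, HasCompactSupport (fun s => F (s, b)) := by
    intro b
    apply HasCompactSupport.intro (hFs.image continuous_fst)
    intro s hs
    by_contra h
    exact hs ⟨(s, b), subset_tsupport F h, rfl⟩
  have hsl2s : ∀ a, HasCompactSupport (fun s => F (a, s)) := by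
    intro a
    apply HasCompactSupport.intro (hFs.image continuous_snd)
    intro s hs
    by_contra h
    exact hs ⟨(a, s), subset_tsupport F h, rfl⟩
  have hsl1c : ∀ b, ContDiff ℝ (⊤ : ℕ∞) (fun s => F (s, b)) :=
    fun b => hF.comp (contDiff_id.prodMk contDiff_const)
  have hsl2c : ∀ a, ContDiff ℝ (⊤ : ℕ∞) (fun s => F (a, s)) :=
    fun a => hF.comp (contDiff_const.prodMk contDiff_id)
  -- pointwise bound
  have key : ∀ a b : ℝ, (F (a,b))^2 ≤ (∫ t, P1 (t, b)) * (∫ t, P2 (a, t)) := by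
    intro a b
    have h1 : |F (a,b)| ≤ ∫ t, P1 (t, b) := by
      have := oneD_bound (hsl1c b) (hsl1s b) a
      refine this.trans (le_of_eq (integral_congr_ae ?_))
      filter_upwards with t
      rw [(hslice1 b t).deriv]
    have h2 : |F (a,b)| ≤ ∫ t, P2 (a, t) := by
      have := oneD_bound (hsl2c a) (hsl2s a) b
      refine this.trans (le_of_eq (integral_congr_ae ?_))
      filter_upwards with t
      rw [(hslice2 a t).deriv]
    calc (F (a,b))^2 = |F (a,b)| * |F (a,b)| := by rw [← abs_mul, ← sq, abs_sq]
      _ ≤ (∫ t, P1 (t, b)) * (∫ t, P2 (a, t)) :=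
          mul_le_mul h1 h2 (abs_nonneg _) ((abs_nonneg _).trans h1)
  -- integrability of F^2
  have hF2i : Integrable (fun p => (F p)^2) := by
    have hc : Continuous (fun p => (F p)^2) := (hF.continuous).pow 2
    exact hc.integrable_of_hasCompactSupport (by simpa [Function.comp_def] using hFs.comp_left (g := fun y : ℝ => y^2) (by simp))
  set g : ℝ → ℝ := fun b => ∫ t, P1 (t, b) with hg
  set h : ℝ → ℝ := fun a => ∫ t, P2 (a, t) with hh
  have hswap : Integrable (fun z : ℝ × ℝ => P1 (z.2, z.1)) (volume.prod volume) := by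
    have : Integrable (P1 ∘ Prod.swap) (volume.prod volume) := by
      apply Continuous.integrable_of_hasCompactSupport (hP1c.comp continuous_swap)
      exact hP1s.comp_homeomorph (Homeomorph.prodComm ℝ ℝ)
    simpa [Function.comp_def, Prod.swap] using this
  have hP2prod : Integrable P2 (volume.prod volume) := by
    rw [← Measure.volume_eq_prod]; exact hP2i
  have hgi : Integrable g := by
    have := hswap.integral_prod_left
    simpa [hg] using this
  have hhi : Integrable h := by
    have := hP2prod.integral_prod_left
    simpa [hh] using this
  have hrhs : Integrable (fun z : ℝ × ℝ => g z.2 * h z.1) := by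
    rw [Measure.volume_eq_prod]
    have := hhi.mul_prod hgi
    simpa [mul_comm] using this
  have step1 : ∫ p, (F p)^2 ≤ ∫ z : ℝ × ℝ, g z.2 * h z.1 := by
    apply integral_mono hF2i hrhs
    intro p
    exact key p.1 p.2
  have step2 : ∫ z : ℝ × ℝ, g z.2 * h z.1 = (∫ b, g b) * (∫ a, h a) := by
    rw [Measure.volume_eq_prod]
    have := integral_prod_mul (μ := (volume : Measure ℝ)) (ν := (volume : Measure ℝ)) h g
    calc ∫ z : ℝ × ℝ, g z.2 * h z.1 ∂(volume.prod volume)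
        = ∫ z : ℝ × ℝ, h z.1 * g z.2 ∂(volume.prod volume) := by
          congr 1; ext z; ring
      _ = (∫ a, h a) * (∫ b, g b) := this
      _ = (∫ b, g b) * (∫ a, h a) := mul_comm _ _
  have hgval : ∫ b, g b = ∫ p, P1 p := by
    have h1 : ∫ b, g b = ∫ z : ℝ × ℝ, P1 (z.2, z.1) ∂(volume.prod volume) := by
      exact integral_integral (f := fun b t => P1 (t, b)) hswap
    rw [h1]
    have := integral_prod_swap (μ := (volume : Measure ℝ)) (ν := (volume : Measure ℝ)) P1
    rw [← Measure.volume_eq_prod] at this ⊢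
    simpa [Prod.swap] using this
  have hhval : ∫ a, h a = ∫ p, P2 p := by
    have h1 : ∫ a, h a = ∫ z : ℝ × ℝ, P2 (z.1, z.2) ∂(volume.prod volume) :=
      integral_integral (f := fun a t => P2 (a, t)) (by simpa [Function.uncurry_def] using hP2prod)
    rw [h1, ← Measure.volume_eq_prod]
  calc ∫ p, (F p)^2 ≤ ∫ z : ℝ × ℝ, g z.2 * h z.1 := step1
    _ = (∫ b, g b) * (∫ a, h a) := step2
    _ = (∫ p, P1 p) * (∫ p, P2 p) := by rw [hgval, hhval]

variable {z : E2' → E2'}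

lemma zj_contDiff (hz : ContDiff ℝ (⊤ : ℕ∞) z) (j : Fin 2) : ContDiff ℝ (⊤ : ℕ∞) (fun q => z q j) :=
  (EuclideanSpace.proj (𝕜 := ℝ) j).contDiff.comp hz

lemma zj_supp (hzs : HasCompactSupport z) (j : Fin 2) :
    HasCompactSupport (fun q => z q j) :=
  hzs.comp_left (g := fun v : E2' => v j) (by simp)

lemma pd_cont (hz : ContDiff ℝ (⊤ : ℕ∞) z) (i j : Fin 2) : Continuous (pd i j z) := by
  exact (ContinuousLinearMap.apply ℝ ℝ (EuclideanSpace.single i 1)).continuous.comp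
    ((zj_contDiff hz j).continuous_fderiv (by simp))

lemma pd_supp (hzs : HasCompactSupport z) (i j : Fin 2) :
    HasCompactSupport (pd i j z) :=
  ((zj_supp hzs j).fderiv ℝ).comp_left
    (g := fun L : E2' →L[ℝ] ℝ => L (EuclideanSpace.single i 1)) (by simp)

lemma norm_sq_eq (p : E2') : ‖p‖^2 = ∑ j : Fin 2, (p j)^2 := by
  rw [EuclideanSpace.norm_eq, Real.sq_sqrt (Finset.sum_nonneg fun i _ => sq_nonneg _)]
  simp [Real.norm_eq_abs, sq_abs]

lemma FE_hasFDeriv (hz : ContDiff ℝ (⊤ : ℕ∞) z) (p : E2') :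
    HasFDerivAt (fun q => ∑ j : Fin 2, (z q j)^2)
      (∑ j : Fin 2, (z p j • fderiv ℝ (fun q => z q j) p
        + z p j • fderiv ℝ (fun q => z q j) p)) p := by
  apply HasFDerivAt.fun_sum
  intro j _
  have hj : HasFDerivAt (fun q => z q j) (fderiv ℝ (fun q => z q j) p) p :=
    ((zj_contDiff hz j).differentiable (by simp) p).hasFDerivAt
  have := hj.mul hj
  simpa [sq, Pi.mul_def] using this

lemma FE_fderiv_apply (hz : ContDiff ℝ (⊤ : ℕ∞) z) (p : E2') (i : Fin 2) :
    fderiv ℝ (fun q => ∑ j : Fin 2, (z q j)^2) p (EuclideanSpace.single i 1)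
      = ∑ j : Fin 2, 2 * (z p j * pd i j z p) := by
  rw [(FE_hasFDeriv hz p).fderiv]
  rw [ContinuousLinearMap.sum_apply]
  congr 1; funext j
  simp [pd, ContinuousLinearMap.add_apply, ContinuousLinearMap.smul_apply, smul_eq_mul]
  ring

lemma FE_fderiv_bound (hz : ContDiff ℝ (⊤ : ℕ∞) z) (p : E2') (i : Fin 2) :
    |fderiv ℝ (fun q => ∑ j : Fin 2, (z q j)^2) p (EuclideanSpace.single i 1)|
      ≤ 2 * ‖z p‖ * Real.sqrt (∑ j : Fin 2, (pd i j z p)^2) := by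
  rw [FE_fderiv_apply hz p i]
  have h1 : |∑ j : Fin 2, 2 * (z p j * pd i j z p)| ≤ ∑ j : Fin 2, 2 * (|z p j| * |pd i j z p|) := by
    refine (Finset.abs_sum_le_sum_abs _ _).trans (le_of_eq ?_)
    congr 1; funext j; rw [abs_mul, abs_mul, abs_two]
  refine h1.trans ?_
  have hstep : ∑ j : Fin 2, 2 * (|z p j| * |pd i j z p|)
      = 2 * ∑ j : Fin 2, |z p j| * |pd i j z p| := by rw [Finset.mul_sum]
  rw [hstep, mul_assoc]
  refine mul_le_mul_of_nonneg_left ?_ (by norm_num)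
  have hcs := cs_sum Finset.univ (fun j => |z p j|) (fun j => |pd i j z p|)
    (fun j => abs_nonneg _) (fun j => abs_nonneg _)
  simp only [sq_abs] at hcs
  refine hcs.trans (le_of_eq ?_)
  congr 1
  rw [EuclideanSpace.norm_eq]
  congr 1
  refine Finset.sum_congr rfl fun j _ => ?_
  rw [Real.norm_eq_abs, sq_abs]

lemma lady (hz : ContDiff ℝ (⊤ : ℕ∞) z) (hzs : HasCompactSupport z) :
    ∫ p, ‖z p‖^4 ≤ 2 * (∫ p, ‖z p‖^2) *
      (∫ p, ∑ i : Fin 2, ∑ j : Fin 2, (pd i j z p)^2) := by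
  classical
  set FE : E2' → ℝ := fun q => ∑ j : Fin 2, (z q j)^2 with hFE
  have hFEc : ContDiff ℝ (⊤ : ℕ∞) FE := ContDiff.sum fun j _ => by
    have := zj_contDiff hz j; simpa [sq] using this.mul this
  have hFEs : HasCompactSupport FE := by
    apply HasCompactSupport.intro hzs
    intro q hq
    have hzq : z q = 0 := image_eq_zero_of_notMem_tsupport hq
    simp [hFE, hzq]
  have hFEcont : Continuous FE := hFEc.continuous
  have hFE0 : ∀ q, 0 ≤ FE q := fun q => Finset.sum_nonneg fun j _ => sq_nonneg _
  have hnormsq : ∀ q, ‖z q‖^2 = FE q := fun q => norm_sq_eq (z q)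
  have hnorm4 : ∀ q, ‖z q‖^4 = (FE q)^2 := fun q => by
    rw [show (4:ℕ) = 2*2 by norm_num, pow_mul, hnormsq]
  -- transfer to ℝ × ℝ
  set F : ℝ × ℝ → ℝ := fun p => FE (psiE p) with hF
  have hFc : ContDiff ℝ (⊤ : ℕ∞) F := hFEc.comp (psiE : (ℝ×ℝ) ≃L[ℝ] E2').contDiff
  have hFs : HasCompactSupport F := hFEs.comp_homeomorph psiE.toHomeomorph
  have hfderivF : ∀ (p : ℝ × ℝ) (v : ℝ × ℝ),
      fderiv ℝ F p v = fderiv ℝ FE (psiE p) (psiE v) := by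
    intro p v
    have h1 : HasFDerivAt FE (fderiv ℝ FE (psiE p)) (psiE p) :=
      ((hFEc.differentiable (by simp)) (psiE p)).hasFDerivAt
    have h2 : HasFDerivAt F ((fderiv ℝ FE (psiE p)).comp
        (psiE : (ℝ×ℝ) →L[ℝ] E2')) p := h1.comp p (psiE.hasFDerivAt)
    rw [h2.fderiv]; rfl
  -- the two partial-derivative integrals
  set gI : Fin 2 → (E2' → ℝ) := fun i q => Real.sqrt (∑ j : Fin 2, (pd i j z q)^2) with hgI
  have hgIc : ∀ i, Continuous (gI i) := fun i => by
    apply Real.continuous_sqrt.comp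
    exact continuous_finset_sum _ fun j _ => (pd_cont hz i j).pow 2
  have hSi : ∀ i, HasCompactSupport (fun q => ∑ j : Fin 2, (pd i j z q)^2) := by
    intro i
    have h0 := (pd_supp hzs i 0).comp_left (g := fun y : ℝ => y^2) (by simp)
    have h1 := (pd_supp hzs i 1).comp_left (g := fun y : ℝ => y^2) (by simp)
    have := h0.add h1
    simpa [Fin.sum_univ_two, Function.comp_def, Pi.add_def] using this
  have hgIs : ∀ i, HasCompactSupport (gI i) := fun i =>
    (hSi i).comp_left (g := Real.sqrt) Real.sqrt_zero
  have hgI0 : ∀ i q, 0 ≤ gI i q := fun i q => Real.sqrt_nonneg _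
  -- step 1: move to ℝ×ℝ
  have e1 : ∫ q : E2', ‖z q‖^4 = ∫ p : ℝ × ℝ, (F p)^2 := by
    rw [show (∫ q : E2', ‖z q‖^4) = ∫ q : E2', (FE q)^2 from by
      congr 1; funext q; exact hnorm4 q]
    exact (psiE_integral (fun q => (FE q)^2)).symm
  -- step 2: apply prod_L4 and identify integrals
  have e2 := prod_L4 hFc hFs
  have e3 : (∫ p : ℝ × ℝ, |fderiv ℝ F p (1,0)|)
      = ∫ q : E2', |fderiv ℝ FE q (EuclideanSpace.single (0:Fin 2) 1)| := by
    rw [show (fun p : ℝ × ℝ => |fderiv ℝ F p (1,0)|)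
        = fun p : ℝ × ℝ => |fderiv ℝ FE (psiE p) (EuclideanSpace.single (0:Fin 2) 1)| from by
      funext p; rw [hfderivF p (1,0), psiE_single0]]
    exact psiE_integral (fun q => |fderiv ℝ FE q (EuclideanSpace.single (0:Fin 2) 1)|)
  have e4 : (∫ p : ℝ × ℝ, |fderiv ℝ F p (0,1)|)
      = ∫ q : E2', |fderiv ℝ FE q (EuclideanSpace.single (1:Fin 2) 1)| := by
    rw [show (fun p : ℝ × ℝ => |fderiv ℝ F p (0,1)|)
        = fun p : ℝ × ℝ => |fderiv ℝ FE (psiE p) (EuclideanSpace.single (1:Fin 2) 1)| from by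
      funext p; rw [hfderivF p (0,1), psiE_single1]]
    exact psiE_integral (fun q => |fderiv ℝ FE q (EuclideanSpace.single (1:Fin 2) 1)|)
  -- step 3: bound each partial integral
  set A : ℝ := ∫ q : E2', ‖z q‖^2 with hA
  set Di : Fin 2 → ℝ := fun i => ∫ q : E2', ∑ j : Fin 2, (pd i j z q)^2 with hDi
  have hA0 : 0 ≤ A := integral_nonneg fun q => by positivity
  have hDi0 : ∀ i, 0 ≤ Di i := fun i =>
    integral_nonneg fun q => Finset.sum_nonneg fun j _ => sq_nonneg _
  have hSicont : ∀ i, Continuous (fun q => ∑ j : Fin 2, (pd i j z q)^2) := fun i =>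
    continuous_finset_sum _ fun j _ => (pd_cont hz i j).pow 2
  have hIb : ∀ i : Fin 2, ∫ q : E2', |fderiv ℝ FE q (EuclideanSpace.single i 1)|
      ≤ 2 * (Real.sqrt A * Real.sqrt (Di i)) := by
    intro i
    have hlhs_cont : Continuous (fun q => |fderiv ℝ FE q (EuclideanSpace.single i 1)|) :=
      ((ContinuousLinearMap.apply ℝ ℝ (EuclideanSpace.single i (1:ℝ))).continuous.comp
        (hFEc.continuous_fderiv (by simp))).abs
    have hlhs_supp : HasCompactSupport (fun q => |fderiv ℝ FE q (EuclideanSpace.single i 1)|) :=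
      (hFEs.fderiv ℝ).comp_left (g := fun L : E2' →L[ℝ] ℝ => |L (EuclideanSpace.single i 1)|)
        (by simp)
    have hrhs_cont : Continuous (fun q => 2 * (‖z q‖ * gI i q)) :=
      (continuous_const.mul (hz.continuous.norm.mul (hgIc i)))
    have hrhs_supp : HasCompactSupport (fun q => 2 * (‖z q‖ * gI i q)) := by
      have := ((hgIs i).mul_left (f := fun q => 2 * ‖z q‖))
      simpa [Pi.mul_def, mul_assoc] using this
    have hmono : ∫ q : E2', |fderiv ℝ FE q (EuclideanSpace.single i 1)|
        ≤ ∫ q : E2', 2 * (‖z q‖ * gI i q) := by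
      apply integral_mono
        (hlhs_cont.integrable_of_hasCompactSupport hlhs_supp)
        (hrhs_cont.integrable_of_hasCompactSupport hrhs_supp)
      intro q
      have := FE_fderiv_bound hz q i
      simpa only [mul_assoc] using this
    refine hmono.trans ?_
    rw [integral_const_mul]
    refine mul_le_mul_of_nonneg_left ?_ (by norm_num)
    have hcs := csL2 (hz.continuous.norm) (hgIc i) (hzs.norm) (hgIs i)
      (fun q => norm_nonneg _) (hgI0 i)
    have hsq : (∫ q : E2', gI i q ^ 2) = Di i := by
      rw [hDi]
      congr 1; funext q
      rw [hgI]
      exact Real.sq_sqrt (Finset.sum_nonneg fun j _ => sq_nonneg _)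
    rw [hsq] at hcs
    exact hcs
  -- step 4: combine
  have hI0nn : (0:ℝ) ≤ ∫ q : E2', |fderiv ℝ FE q (EuclideanSpace.single (1:Fin 2) 1)| :=
    integral_nonneg fun q => abs_nonneg _
  have hfin : ∫ q : E2', ‖z q‖^4 ≤
      (2 * (Real.sqrt A * Real.sqrt (Di 0))) * (2 * (Real.sqrt A * Real.sqrt (Di 1))) := by
    rw [e1]
    refine e2.trans ?_
    rw [e3, e4]
    exact mul_le_mul (hIb 0) (hIb 1) hI0nn (by positivity)
  have hDsum : (∫ q : E2', ∑ i : Fin 2, ∑ j : Fin 2, (pd i j z q)^2) = Di 0 + Di 1 := by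
    rw [show (fun q : E2' => ∑ i : Fin 2, ∑ j : Fin 2, (pd i j z q)^2)
        = fun q : E2' => (∑ j : Fin 2, (pd 0 j z q)^2) + (∑ j : Fin 2, (pd 1 j z q)^2) from by
      funext q; rw [Fin.sum_univ_two]]
    rw [integral_add]
    · exact (hSicont 0).integrable_of_hasCompactSupport (hSi 0)
    · exact (hSicont 1).integrable_of_hasCompactSupport (hSi 1)
  refine hfin.trans ?_
  rw [hDsum]
  have h1 : Real.sqrt (Di 0) * Real.sqrt (Di 1) ≤ (Di 0 + Di 1) / 2 := by
    nlinarith [sq_nonneg (Real.sqrt (Di 0) - Real.sqrt (Di 1)),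
      Real.sq_sqrt (hDi0 0), Real.sq_sqrt (hDi0 1),
      Real.sqrt_nonneg (Di 0), Real.sqrt_nonneg (Di 1)]
  have hAA : Real.sqrt A * Real.sqrt A = A := Real.mul_self_sqrt hA0
  have heq : 2 * (Real.sqrt A * Real.sqrt (Di 0)) * (2 * (Real.sqrt A * Real.sqrt (Di 1)))
      = 4 * A * (Real.sqrt (Di 0) * Real.sqrt (Di 1)) := by linear_combination 4 * Real.sqrt (Di 0) * Real.sqrt (Di 1) * hAA
  rw [heq]
  calc 4 * A * (Real.sqrt (Di 0) * Real.sqrt (Di 1))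
      ≤ 4 * A * ((Di 0 + Di 1) / 2) :=
        mul_le_mul_of_nonneg_left h1 (by positivity)
    _ = 2 * A * (Di 0 + Di 1) := by ring

lemma norm_eq_sqrt_sum (p : E2') : ‖p‖ = Real.sqrt (∑ j : Fin 2, (p j)^2) := by
  rw [← norm_sq_eq]; exact (Real.sqrt_sq (norm_nonneg p)).symm

/-- Key analytic estimate of the local monotonicity lemma:
`|b(z,z,x)| ≤ (ν/4) ‖∇z‖²_{L²} + (27/(2ν³)) ‖z‖²_{L²} ‖x‖⁴_{L⁴}`. -/
theorem stmt_18 (ν : ℝ) (hν : 0 < ν)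
    (z x : EuclideanSpace ℝ (Fin 2) → EuclideanSpace ℝ (Fin 2))
    (hz : ContDiff ℝ (⊤ : ℕ∞) z) (hx : ContDiff ℝ (⊤ : ℕ∞) x)
    (hzs : HasCompactSupport z) (hxs : HasCompactSupport x) :
    |triForm z z x| ≤
      ν/4 * (∫ p, ∑ i : Fin 2, ∑ j : Fin 2, (pd i j z p)^2) +
      27/(2*ν^3) * (∫ p, ‖z p‖^2) * ∫ p, ‖x p‖^4 := by
  classical
  set D : ℝ := ∫ p, ∑ i : Fin 2, ∑ j : Fin 2, (pd i j z p)^2 with hD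
  set A : ℝ := ∫ p, ‖z p‖^2 with hA
  set M : ℝ := ∫ p, ‖x p‖^4 with hM
  have hA0 : 0 ≤ A := integral_nonneg fun q => by positivity
  have hM0 : 0 ≤ M := integral_nonneg fun q => by positivity
  have hD0 : 0 ≤ D := integral_nonneg fun q =>
    Finset.sum_nonneg fun i _ => Finset.sum_nonneg fun j _ => sq_nonneg _
  -- the Frobenius norm of the gradient
  set G : E2' → ℝ := fun q => Real.sqrt (∑ i : Fin 2, ∑ j : Fin 2, (pd i j z q)^2) with hG
  have hScont : Continuous (fun q => ∑ i : Fin 2, ∑ j : Fin 2, (pd i j z q)^2) :=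
    continuous_finset_sum _ fun i _ => continuous_finset_sum _ fun j _ => (pd_cont hz i j).pow 2
  have hSsupp : HasCompactSupport (fun q => ∑ i : Fin 2, ∑ j : Fin 2, (pd i j z q)^2) := by
    have h : ∀ i j : Fin 2, HasCompactSupport (fun q => (pd i j z q)^2) := fun i j => by
      have := (pd_supp hzs i j).comp_left (g := fun y : ℝ => y^2) (by simp)
      simpa [Function.comp_def] using this
    have := ((h 0 0).add (h 0 1)).add ((h 1 0).add (h 1 1))
    simpa [Fin.sum_univ_two, Pi.add_def] using this
  have hGc : Continuous G := Real.continuous_sqrt.comp hScont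
  have hGs : HasCompactSupport G := hSsupp.comp_left (g := Real.sqrt) Real.sqrt_zero
  have hG0 : ∀ q, 0 ≤ G q := fun q => Real.sqrt_nonneg _
  have hGsq : ∀ q, (G q)^2 = ∑ i : Fin 2, ∑ j : Fin 2, (pd i j z q)^2 := fun q =>
    Real.sq_sqrt (Finset.sum_nonneg fun i _ => Finset.sum_nonneg fun j _ => sq_nonneg _)
  -- step 1 : single integral form
  have hzi_cont : ∀ i : Fin 2, Continuous (fun q => z q i) := fun i =>
    (EuclideanSpace.proj (𝕜 := ℝ) i).continuous.comp hz.continuous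
  have hxj_cont : ∀ j : Fin 2, Continuous (fun q => x q j) := fun j =>
    (EuclideanSpace.proj (𝕜 := ℝ) j).continuous.comp hx.continuous
  have hint : ∀ i j : Fin 2, Integrable (fun q => z q i * pd i j z q * x q j) := by
    intro i j
    apply Continuous.integrable_of_hasCompactSupport
    · exact ((hzi_cont i).mul (pd_cont hz i j)).mul (hxj_cont j)
    · have := ((zj_supp hzs i).mul_right (f' := pd i j z)).mul_right (f' := fun q => x q j)
      simpa [Pi.mul_def] using this
  have step1 : triForm z z x = ∫ q, ∑ i : Fin 2, ∑ j : Fin 2, z q i * pd i j z q * x q j := by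
    have e : ∀ i : Fin 2, (∑ j : Fin 2, ∫ q, z q i * pd i j z q * x q j)
        = ∫ q, ∑ j : Fin 2, z q i * pd i j z q * x q j := fun i =>
      (integral_finset_sum _ fun j _ => hint i j).symm
    calc triForm z z x = ∑ i : Fin 2, ∫ q, ∑ j : Fin 2, z q i * pd i j z q * x q j := by
          rw [triForm]; exact Finset.sum_congr rfl fun i _ => e i
      _ = ∫ q, ∑ i : Fin 2, ∑ j : Fin 2, z q i * pd i j z q * x q j :=
          (integral_finset_sum _ fun i _ => integrable_finset_sum _ fun j _ => hint i j).symm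
  -- step 2 : pointwise Cauchy-Schwarz
  have hpt : ∀ q, |∑ i : Fin 2, ∑ j : Fin 2, z q i * pd i j z q * x q j|
      ≤ (‖z q‖ * ‖x q‖) * G q := by
    intro q
    set r : Fin 2 → ℝ := fun i => Real.sqrt (∑ j : Fin 2, (pd i j z q)^2) with hr
    have hr0 : ∀ i, 0 ≤ r i := fun i => Real.sqrt_nonneg _
    have hinner : ∀ i : Fin 2, |∑ j : Fin 2, pd i j z q * x q j| ≤ r i * ‖x q‖ := by
      intro i
      refine (Finset.abs_sum_le_sum_abs _ _).trans ?_
      have h1 : ∑ j : Fin 2, |pd i j z q * x q j| = ∑ j : Fin 2, |pd i j z q| * |x q j| := by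
        refine Finset.sum_congr rfl fun j _ => abs_mul _ _
      rw [h1]
      have h2 := cs_sum Finset.univ (fun j => |pd i j z q|) (fun j => |x q j|)
        (fun j => abs_nonneg _) (fun j => abs_nonneg _)
      simp only [sq_abs] at h2
      refine h2.trans (le_of_eq ?_)
      rw [norm_eq_sqrt_sum (x q), hr]
    have habs : |∑ i : Fin 2, ∑ j : Fin 2, z q i * pd i j z q * x q j|
        ≤ ∑ i : Fin 2, |z q i| * (r i * ‖x q‖) := by
      refine (Finset.abs_sum_le_sum_abs _ _).trans (Finset.sum_le_sum fun i _ => ?_)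
      have h3 : ∑ j : Fin 2, z q i * pd i j z q * x q j
          = z q i * ∑ j : Fin 2, pd i j z q * x q j := by
        rw [Finset.mul_sum]; refine Finset.sum_congr rfl fun j _ => by ring
      rw [h3, abs_mul]
      exact mul_le_mul_of_nonneg_left (hinner i) (abs_nonneg _)
    refine habs.trans ?_
    have h4 : ∑ i : Fin 2, |z q i| * (r i * ‖x q‖) = (∑ i : Fin 2, |z q i| * r i) * ‖x q‖ := by
      rw [Finset.sum_mul]; refine Finset.sum_congr rfl fun i _ => by ring
    rw [h4]
    have h5 := cs_sum Finset.univ (fun i => |z q i|) r (fun i => abs_nonneg _) hr0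
    simp only [sq_abs] at h5
    have h6 : Real.sqrt (∑ i : Fin 2, (r i)^2) = G q := by
      rw [hG]; congr 1
      refine Finset.sum_congr rfl fun i _ => ?_
      rw [hr]; exact Real.sq_sqrt (Finset.sum_nonneg fun j _ => sq_nonneg _)
    rw [h6, ← norm_eq_sqrt_sum (z q)] at h5
    calc (∑ i : Fin 2, |z q i| * r i) * ‖x q‖ ≤ (‖z q‖ * G q) * ‖x q‖ :=
          mul_le_mul_of_nonneg_right h5 (norm_nonneg _)
      _ = (‖z q‖ * ‖x q‖) * G q := by ring
  -- step 2' : |triForm| ≤ ∫ (‖z‖‖x‖) G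
  have hzx_cont : Continuous (fun q => ‖z q‖ * ‖x q‖) := hz.continuous.norm.mul hx.continuous.norm
  have hzx_supp : HasCompactSupport (fun q => ‖z q‖ * ‖x q‖) := by
    have := (hzs.norm.mul_right (f' := fun q => ‖x q‖))
    simpa [Pi.mul_def] using this
  have hprod_cont : Continuous (fun q => (‖z q‖ * ‖x q‖) * G q) := hzx_cont.mul hGc
  have hprod_supp : HasCompactSupport (fun q => (‖z q‖ * ‖x q‖) * G q) := by
    have := (hzx_supp.mul_right (f' := G))
    simpa [Pi.mul_def] using this
  have hSint : Integrable (fun q => ∑ i : Fin 2, ∑ j : Fin 2, z q i * pd i j z q * x q j) :=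
    integrable_finset_sum _ fun i _ => integrable_finset_sum _ fun j _ => hint i j
  have step2 : |triForm z z x| ≤ ∫ q, (‖z q‖ * ‖x q‖) * G q := by
    rw [step1]
    have habs : |∫ q, ∑ i : Fin 2, ∑ j : Fin 2, z q i * pd i j z q * x q j|
        ≤ ∫ q, |∑ i : Fin 2, ∑ j : Fin 2, z q i * pd i j z q * x q j| := by
      simpa [Real.norm_eq_abs] using
        norm_integral_le_integral_norm (fun q => ∑ i : Fin 2, ∑ j : Fin 2, z q i * pd i j z q * x q j)
    refine habs.trans ?_
    apply integral_mono hSint.abs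
      (hprod_cont.integrable_of_hasCompactSupport hprod_supp)
    exact hpt
  -- step 3 : Hölder
  have step3 : ∫ q, (‖z q‖ * ‖x q‖) * G q
      ≤ Real.sqrt (∫ q, (‖z q‖ * ‖x q‖)^2) * Real.sqrt D := by
    have := csL2 hzx_cont hGc hzx_supp hGs (fun q => by positivity) hG0
    refine this.trans (le_of_eq ?_)
    congr 2
    rw [hD]
    congr 1; funext q; exact hGsq q
  -- step 4 : Hölder again
  have hz2_cont : Continuous (fun q => ‖z q‖^2) := hz.continuous.norm.pow 2
  have hx2_cont : Continuous (fun q => ‖x q‖^2) := hx.continuous.norm.pow 2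
  have hz2_supp : HasCompactSupport (fun q => ‖z q‖^2) := by
    have := hzs.norm.comp_left (g := fun y : ℝ => y^2) (by simp)
    simpa [Function.comp_def] using this
  have hx2_supp : HasCompactSupport (fun q => ‖x q‖^2) := by
    have := hxs.norm.comp_left (g := fun y : ℝ => y^2) (by simp)
    simpa [Function.comp_def] using this
  have step4 : ∫ q, (‖z q‖ * ‖x q‖)^2 ≤ Real.sqrt (∫ q, ‖z q‖^4) * Real.sqrt M := by
    have := csL2 hz2_cont hx2_cont hz2_supp hx2_supp
      (fun q => by positivity) (fun q => by positivity)
    have e : ∫ q, (‖z q‖ * ‖x q‖)^2 = ∫ q, ‖z q‖^2 * ‖x q‖^2 := by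
      congr 1; funext q; ring
    rw [e]
    refine this.trans (le_of_eq ?_)
    congr 2
    · congr 1; funext q; ring
    · rw [hM]; congr 1; funext q; ring
  -- step 5 : Ladyzhenskaya
  have step5 : ∫ q, ‖z q‖^4 ≤ 2 * A * D := lady hz hzs
  -- combine
  have hQ0 : 0 ≤ ∫ q, ‖z q‖^4 := integral_nonneg fun q => by positivity
  have chain : |triForm z z x| ≤ Real.sqrt (Real.sqrt (2*A*D) * Real.sqrt M) * Real.sqrt D := by
    refine step2.trans (step3.trans ?_)
    refine mul_le_mul_of_nonneg_right ?_ (Real.sqrt_nonneg D)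
    refine Real.sqrt_le_sqrt (step4.trans ?_)
    exact mul_le_mul_of_nonneg_right (Real.sqrt_le_sqrt step5) (Real.sqrt_nonneg M)
  -- final Young / AM-GM step
  set X : ℝ := Real.sqrt (Real.sqrt (2*A*D) * Real.sqrt M) * Real.sqrt D with hX
  have hX0 : 0 ≤ X := by positivity
  have hX4 : X^4 = 2 * A * M * D^3 := by
    have h2AD : 0 ≤ 2*A*D := by positivity
    have hXsq : X^2 = (Real.sqrt (2*A*D) * Real.sqrt M) * D := by
      rw [hX, mul_pow, Real.sq_sqrt (by positivity), Real.sq_sqrt hD0]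
    have : X^4 = (X^2)^2 := by ring
    rw [this, hXsq]
    rw [mul_pow, mul_pow, Real.sq_sqrt h2AD, Real.sq_sqrt hM0]
    ring
  clear_value D A M
  have hν' : ν ≠ 0 := ne_of_gt hν
  set p1 : ℝ := ν/3 * D with hp1
  set p2 : ℝ := 54/ν^3 * (A*M) with hp2
  have hp10 : 0 ≤ p1 := by positivity
  have hp20 : 0 ≤ p2 := by positivity
  set Y : ℝ := p1 ^ ((3:ℝ)/4) * p2 ^ ((1:ℝ)/4) with hY
  have hY0 : 0 ≤ Y := by positivity
  have hY4 : Y^4 = p1^3 * p2 := by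
    have e1 : ((3:ℝ)/4) * ((4:ℕ):ℝ) = ((3:ℕ):ℝ) := by norm_num
    have e2 : ((1:ℝ)/4) * ((4:ℕ):ℝ) = ((1:ℕ):ℝ) := by norm_num
    rw [hY, mul_pow, ← Real.rpow_natCast (p1 ^ ((3:ℝ)/4)) 4, ← Real.rpow_natCast (p2 ^ ((1:ℝ)/4)) 4,
      ← Real.rpow_mul hp10, ← Real.rpow_mul hp20, e1, e2, Real.rpow_natCast, Real.rpow_natCast,
      pow_one]
  have hXY : X = Y := by
    have h4 : X^4 = Y^4 := by
      rw [hX4, hY4, hp1, hp2]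
      field_simp
      ring
    calc X = (X^4) ^ ((4:ℕ)⁻¹ : ℝ) := (Real.pow_rpow_inv_natCast hX0 (by norm_num)).symm
      _ = (Y^4) ^ ((4:ℕ)⁻¹ : ℝ) := by rw [h4]
      _ = Y := Real.pow_rpow_inv_natCast hY0 (by norm_num)
  have hgeom := Real.geom_mean_le_arith_mean2_weighted
    (by norm_num : (0:ℝ) ≤ 3/4) (by norm_num : (0:ℝ) ≤ 1/4) hp10 hp20 (by norm_num)
  have hfinal : Y ≤ ν/4 * D + 27/(2*ν^3) * A * M := by
    refine hgeom.trans (le_of_eq ?_)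
    rw [hp1, hp2]
    field_simp
    ring
  rw [hXY] at chain
  exact chain.trans hfinal
end
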